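/- arXiv:2402.10165 — 2 statements merged into one kernel-verified Lean document; each statement's English description precedes it below -/
import Mathlib

section
/- Let a group G act by isometries on two proper geodesic metric spaces (X1,d1) and (X2,d2), and suppose each action has the contracting property. If the two actions have the same marked length spectrum, i.e. ℓ_{d1}(g) = ℓ_{d2}(g) for every g ∈ G, then for any basepoints o1 ∈ X1 and o2 ∈ X2 one has sup_{g,h ∈ G} |d1(g·o1, h·o1) − d2(g·o2, h·o2)| < ∞; equivalently, the orbit map g·o1 ↦ g·o2 from G·o1 to G·o2 is a rough isometry (a (1,C)-quasi-isometric embedding with coarsely dense image, for some C ≥ 0). -/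
open Metric

/-- A geodesic parametrisation from `x` to `y`, with image `s`: an isometric embedding of
the interval `[0, dist x y]` sending the endpoints to `x` and `y`. -/
def IsGeodesicFromTo {X : Type*} [MetricSpace X] (s : Set X) (x y : X) : Prop :=
  ∃ γ : ℝ → X,
    (∀ u ∈ Set.Icc (0 : ℝ) (dist x y), ∀ v ∈ Set.Icc (0 : ℝ) (dist x y),
      dist (γ u) (γ v) = |u - v|) ∧
    γ 0 = x ∧ γ (dist x y) = y ∧ s = γ '' Set.Icc (0 : ℝ) (dist x y)

/-- A geodesic segment: the image of an isometric embedding of a compact real interval. -/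
def IsGeodesicSegment {X : Type*} [MetricSpace X] (s : Set X) : Prop :=
  ∃ x y : X, IsGeodesicFromTo s x y

/-- A metric space is geodesic if any two points are joined by a geodesic segment. -/
def GeodesicSpace (X : Type*) [MetricSpace X] : Prop :=
  ∀ x y : X, ∃ s : Set X, IsGeodesicFromTo s x y

/-- Closest point projection of a point to a subset:
`π_Y(x) = {y ∈ closure Y | d(x,y) = d(x,Y)}`. -/
def projSet {X : Type*} [MetricSpace X] (Y : Set X) (x : X) : Set X :=
  {y ∈ closure Y | dist x y = Metric.infDist x Y}

/-- Closest point projection of a subset `B`: `π_Y(B) = ⋃_{x ∈ B} π_Y(x)`. -/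
def projSetOf {X : Type*} [MetricSpace X] (Y B : Set X) : Set X :=
  ⋃ x ∈ B, projSet Y x

/-- The closed `r`-neighbourhood `N_r(A) = {x | d(x,A) ≤ r}`. -/
def ptNbhd {X : Type*} [MetricSpace X] (r : ℝ) (A : Set X) : Set X :=
  {x | Metric.infDist x A ≤ r}

/-- `Y` is `C`-contracting : for every geodesic segment `s` with `d(s,Y) ≥ C`,
one has `diam (π_Y(s)) ≤ C`. -/
def IsContractingWith {X : Type*} [MetricSpace X] (C : ℝ) (Y : Set X) : Prop :=
  ∀ s : Set X, IsGeodesicSegment s → (∀ x ∈ s, C ≤ Metric.infDist x Y) →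
    ∀ p ∈ projSetOf Y s, ∀ q ∈ projSetOf Y s, dist p q ≤ C

/-- `Y` is contracting if it is `C`-contracting for some `C ≥ 0`. -/
def IsContractingSet {X : Type*} [MetricSpace X] (Y : Set X) : Prop :=
  ∃ C : ℝ, 0 ≤ C ∧ IsContractingWith C Y

/-- `Y` and `Z` have `R`-bounded intersection for some gauge function `R`:
`diam (N_r(Y) ∩ N_r(Z)) ≤ R r` for all `r ≥ 0`. -/
def HasBoundedIntersection {X : Type*} [MetricSpace X] (Y Z : Set X) : Prop :=
  ∃ R : ℝ → ℝ, ∀ r : ℝ, 0 ≤ r →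
    ∀ p ∈ ptNbhd r Y ∩ ptNbhd r Z, ∀ q ∈ ptNbhd r Y ∩ ptNbhd r Z, dist p q ≤ R r

/-- The orbit `⟨g⟩ · o` of the basepoint under the cyclic subgroup generated by `g`. -/
def cyclicOrbit {G X : Type*} [Group G] [MetricSpace X] [MulAction G X] (g : G) (o : X) :
    Set X :=
  Set.range fun n : ℤ => (g ^ n) • o

/-- `g` is a contracting element for the action: the orbit `⟨g⟩ · o` is a contracting
subset and `n ↦ gⁿ • o` is a quasi-isometric embedding of `ℤ`. -/
def IsContractingElement {G X : Type*} [Group G] [MetricSpace X] [MulAction G X]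
    (o : X) (g : G) : Prop :=
  IsContractingSet (cyclicOrbit g o) ∧
    ∃ K c : ℝ, 1 ≤ K ∧ 0 ≤ c ∧ ∀ m n : ℤ,
      |(m : ℝ) - (n : ℝ)| / K - c ≤ dist ((g ^ m) • o) ((g ^ n) • o) ∧
      dist ((g ^ m) • o) ((g ^ n) • o) ≤ K * |(m : ℝ) - (n : ℝ)| + c

/-- Two elements are weakly independent if their cyclic orbits have bounded intersection. -/
def WeaklyIndependent {G X : Type*} [Group G] [MetricSpace X] [MulAction G X]
    (o : X) (g h : G) : Prop :=
  HasBoundedIntersection (cyclicOrbit g o) (cyclicOrbit h o)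

/-- The action of `G` on `X` has the contracting property: there exist two weakly
independent contracting elements. -/
def ContractingProperty (G : Type*) (X : Type*) [Group G] [MetricSpace X] [MulAction G X]
    (o : X) : Prop :=
  ∃ g h : G, IsContractingElement o g ∧ IsContractingElement o h ∧ WeaklyIndependent o g h

/-- Stable translation length `ℓ_d(g) = lim_n d(o, gⁿ • o)/n`; by subadditivity (Fekete's
lemma) the limit exists and equals the infimum below. -/
noncomputable def stableLength {G X : Type*} [Group G] [MetricSpace X] [MulAction G X]
    (o : X) (g : G) : ℝ :=
  ⨅ n : ℕ+, dist o ((g ^ (n : ℕ)) • o) / ((n : ℕ) : ℝ)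


/-! ### Basic facts about closest-point projections and geodesics -/

section Toolkit

variable {X : Type*} [MetricSpace X]

lemma projSet_nonempty [ProperSpace X] {Y : Set X} (hY : Y.Nonempty) (x : X) :
    (projSet Y x).Nonempty := by
  obtain ⟨y, hy, hdy⟩ := exists_mem_closure_infDist_eq_dist hY x
  exact ⟨y, hy, hdy.symm⟩

lemma mem_projSet_self {Y : Set X} (hY : Y.Nonempty) {y : X} (hy : y ∈ closure Y) :
    y ∈ projSet Y y :=
  ⟨hy, by rw [dist_self, ((mem_closure_iff_infDist_zero hY).1 hy)]⟩

lemma projSet_dist_eq {Y : Set X} {x p : X} (hp : p ∈ projSet Y x) :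
    dist x p = Metric.infDist x Y := hp.2

lemma dist_le_of_mem_projSet {Y : Set X} {x p : X} (hp : p ∈ projSet Y x) {y : X}
    (hy : y ∈ Y) : dist x p ≤ dist x y :=
  (projSet_dist_eq hp).le.trans (Metric.infDist_le_dist_of_mem hy)

lemma mem_projSetOf {Y B : Set X} {x p : X} (hx : x ∈ B) (hp : p ∈ projSet Y x) :
    p ∈ projSetOf Y B :=
  Set.mem_biUnion hx hp

/-- The image of a subinterval of a geodesic parametrisation is a geodesic. -/
lemma subseg {γ : ℝ → X} {x y : X}
    (hiso : ∀ u ∈ Set.Icc (0:ℝ) (dist x y), ∀ v ∈ Set.Icc (0:ℝ) (dist x y),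
      dist (γ u) (γ v) = |u - v|)
    {a b : ℝ} (h0a : 0 ≤ a) (hab : a ≤ b) (hbL : b ≤ dist x y) :
    IsGeodesicFromTo (γ '' Set.Icc a b) (γ a) (γ b) := by
  have haI : a ∈ Set.Icc (0:ℝ) (dist x y) := ⟨h0a, hab.trans hbL⟩
  have hbI : b ∈ Set.Icc (0:ℝ) (dist x y) := ⟨h0a.trans hab, hbL⟩
  have hd : dist (γ a) (γ b) = b - a := by
    rw [hiso a haI b hbI, abs_sub_comm, abs_of_nonneg (by linarith)]
  refine ⟨fun t => γ (a + t), ?_, by simp, ?_, ?_⟩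
  · intro u hu v hv
    rw [hd] at hu hv
    have hu' : a + u ∈ Set.Icc (0:ℝ) (dist x y) :=
      ⟨by linarith [hu.1], by linarith [hu.2]⟩
    have hv' : a + v ∈ Set.Icc (0:ℝ) (dist x y) :=
      ⟨by linarith [hv.1], by linarith [hv.2]⟩
    rw [hiso _ hu' _ hv']
    congr 1
    ring
  · rw [hd]
    show γ (a + (b - a)) = γ b
    rw [show a + (b - a) = b by ring]
  · rw [hd, show γ '' Set.Icc a b = γ '' ((fun t => a + t) '' Set.Icc 0 (b - a)) by
      rw [Set.image_const_add_Icc, add_zero, show a + (b - a) = b by ring],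
      ← Set.image_comp]
    rfl

/-- **Core dichotomy**: a geodesic from `x` to `y` either stays `C`-far from a
`C`-contracting set `Y` (whence the projections of `x` and `y` are `C`-close), or it
has a first-entry and a last-exit point in the `C`-neighbourhood of `Y` which are
`2C`-close to the projections of `x` resp. `y`. -/
lemma core_dichotomy [ProperSpace X]
    {C : ℝ} (hC : 0 ≤ C) {Y : Set X} (hY : Y.Nonempty) (hcon : IsContractingWith C Y)
    {x y : X} {γ : ℝ → X}
    (hiso : ∀ u ∈ Set.Icc (0:ℝ) (dist x y), ∀ v ∈ Set.Icc (0:ℝ) (dist x y),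
      dist (γ u) (γ v) = |u - v|)
    (h0 : γ 0 = x) (hLy : γ (dist x y) = y) :
    (∀ p ∈ projSet Y x, ∀ q ∈ projSet Y y, dist p q ≤ C) ∨
    (∃ t₁ t₂ : ℝ, t₁ ∈ Set.Icc 0 (dist x y) ∧ t₂ ∈ Set.Icc 0 (dist x y) ∧ t₁ ≤ t₂ ∧
      dist x y = dist x (γ t₁) + dist (γ t₁) (γ t₂) + dist (γ t₂) y ∧
      Metric.infDist (γ t₁) Y ≤ C ∧ Metric.infDist (γ t₂) Y ≤ C ∧
      (∀ p ∈ projSet Y x, dist (γ t₁) p ≤ 2*C) ∧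
      (∀ q ∈ projSet Y y, dist (γ t₂) q ≤ 2*C)) := by
  set L := dist x y with hLdef
  have hL0 : 0 ≤ L := dist_nonneg
  have hlip : ∀ s ∈ Set.Icc (0:ℝ) L, ∀ t ∈ Set.Icc (0:ℝ) L,
      Metric.infDist (γ s) Y ≤ Metric.infDist (γ t) Y + |s - t| := by
    intro s hs t ht
    calc Metric.infDist (γ s) Y ≤ Metric.infDist (γ t) Y + dist (γ s) (γ t) :=
          Metric.infDist_le_infDist_add_dist
      _ = Metric.infDist (γ t) Y + |s - t| := by rw [hiso s hs t ht]
  set S : Set ℝ := {t | t ∈ Set.Icc (0:ℝ) L ∧ Metric.infDist (γ t) Y ≤ C} with hSdef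
  by_cases hSne : S.Nonempty
  · right
    have hSsub : S ⊆ Set.Icc (0:ℝ) L := fun t ht => ht.1
    have hbdd : BddBelow S := ⟨0, fun t ht => (hSsub ht).1⟩
    have hbdd' : BddAbove S := ⟨L, fun t ht => (hSsub ht).2⟩
    obtain ⟨u₀, hu₀⟩ := hSne
    have hSne : S.Nonempty := ⟨u₀, hu₀⟩
    set t₁ := sInf S with ht₁def
    set t₂ := sSup S with ht₂def
    have ht₁I : t₁ ∈ Set.Icc (0:ℝ) L :=
      ⟨le_csInf hSne (fun t ht => (hSsub ht).1), (csInf_le hbdd hu₀).trans (hSsub hu₀).2⟩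
    have ht₂I : t₂ ∈ Set.Icc (0:ℝ) L :=
      ⟨(hSsub hu₀).1.trans (le_csSup hbdd' hu₀), csSup_le hSne (fun t ht => (hSsub ht).2)⟩
    have ht₁₂ : t₁ ≤ t₂ := (csInf_le hbdd hu₀).trans (le_csSup hbdd' hu₀)
    have hlow : ∀ t, 0 ≤ t → t < t₁ → C < Metric.infDist (γ t) Y := by
      intro t ht0 htlt
      by_contra hcc
      push_neg at hcc
      exact absurd (csInf_le hbdd ⟨⟨ht0, htlt.le.trans ht₁I.2⟩, hcc⟩) (not_le.2 htlt)
    have hhigh : ∀ t, t₂ < t → t ≤ L → C < Metric.infDist (γ t) Y := by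
      intro t htlt htL
      by_contra hcc
      push_neg at hcc
      exact absurd (le_csSup hbdd' ⟨⟨ht₂I.1.trans htlt.le, htL⟩, hcc⟩) (not_le.2 htlt)
    have hφ₁ : Metric.infDist (γ t₁) Y ≤ C := by
      by_contra hcon'
      push_neg at hcon'
      obtain ⟨t, htS, htlt⟩ := Real.lt_sInf_add_pos hSne
        (by linarith : (0:ℝ) < Metric.infDist (γ t₁) Y - C)
      have h1 : t₁ ≤ t := csInf_le hbdd htS
      have h2 := hlip t₁ ht₁I t (hSsub htS)
      rw [abs_of_nonpos (by linarith)] at h2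
      have h3 := htS.2
      linarith
    have hφ₂ : Metric.infDist (γ t₂) Y ≤ C := by
      by_contra hcon'
      push_neg at hcon'
      obtain ⟨t, htS, htlt⟩ := Real.add_neg_lt_sSup hSne
        (by linarith : -(Metric.infDist (γ t₂) Y - C) < 0)
      have h1 : t ≤ t₂ := le_csSup hbdd' htS
      have h2 := hlip t₂ ht₂I t (hSsub htS)
      rw [abs_of_nonneg (by linarith)] at h2
      have h3 := htS.2
      linarith
    have hend1 : 0 < t₁ → C ≤ Metric.infDist (γ t₁) Y := by
      intro ht₁pos
      by_contra hcc
      push_neg at hcc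
      set ε := C - Metric.infDist (γ t₁) Y with hεdef
      have hε0 : 0 < ε := by simp only [hεdef]; linarith
      set t' := max (t₁/2) (t₁ - ε/2) with ht'def
      have ht'lt : t' < t₁ := max_lt (by linarith) (by linarith)
      have ht'0 : 0 ≤ t' := le_trans (by linarith) (le_max_left _ _)
      have ht'I : t' ∈ Set.Icc (0:ℝ) L := ⟨ht'0, ht'lt.le.trans ht₁I.2⟩
      have h2 := hlip t' ht'I t₁ ht₁I
      rw [abs_of_nonpos (by linarith)] at h2
      have h3 : t₁ - t' ≤ ε/2 := by
        have := le_max_right (t₁/2) (t₁ - ε/2)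
        simp only [ht'def] at *
        linarith [le_max_right (t₁/2) (t₁ - ε/2)]
      have h4 := hlow t' ht'0 ht'lt
      simp only [hεdef] at *
      linarith
    have hend2 : t₂ < L → C ≤ Metric.infDist (γ t₂) Y := by
      intro ht₂lt
      by_contra hcc
      push_neg at hcc
      set ε := C - Metric.infDist (γ t₂) Y with hεdef
      have hε0 : 0 < ε := by simp only [hεdef]; linarith
      set t' := min ((t₂ + L)/2) (t₂ + ε/2) with ht'def
      have ht'gt : t₂ < t' := lt_min (by linarith) (by linarith)
      have ht'L : t' ≤ L := le_trans (min_le_left _ _) (by linarith)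
      have ht'I : t' ∈ Set.Icc (0:ℝ) L := ⟨ht₂I.1.trans ht'gt.le, ht'L⟩
      have h2 := hlip t' ht'I t₂ ht₂I
      rw [abs_of_nonneg (by linarith)] at h2
      have h3 : t' - t₂ ≤ ε/2 := by
        have := min_le_right ((t₂ + L)/2) (t₂ + ε/2)
        simp only [ht'def] at *
        linarith [min_le_right ((t₂ + L)/2) (t₂ + ε/2)]
      have h4 := hhigh t' ht'gt ht'L
      simp only [hεdef] at *
      linarith
    have hd1 : dist x (γ t₁) = t₁ := by
      rw [← h0, hiso 0 ⟨le_refl _, hL0⟩ t₁ ht₁I, abs_sub_comm, sub_zero,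
        abs_of_nonneg ht₁I.1]
    have hd2 : dist (γ t₁) (γ t₂) = t₂ - t₁ := by
      rw [hiso t₁ ht₁I t₂ ht₂I, abs_sub_comm, abs_of_nonneg (by linarith)]
    have hd3 : dist (γ t₂) y = L - t₂ := by
      rw [← hLy, hiso t₂ ht₂I L ⟨hL0, le_refl _⟩, abs_sub_comm,
        abs_of_nonneg (by linarith [ht₂I.2])]
    refine ⟨t₁, t₂, ht₁I, ht₂I, ht₁₂, by rw [hd1, hd2, hd3]; ring, hφ₁, hφ₂, ?_, ?_⟩
    · intro p hp
      rcases eq_or_lt_of_le ht₁I.1 with h01 | h01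
      · have hxt : γ t₁ = x := by rw [← h01, h0]
        have h2 : dist (γ t₁) p ≤ C := by
          rw [hxt, projSet_dist_eq hp, ← hxt]
          exact hφ₁
        linarith
      · obtain ⟨p₁, hp₁⟩ := projSet_nonempty hY (γ t₁)
        have hseg : IsGeodesicSegment (γ '' Set.Icc 0 t₁) := by
          have := subseg (x := x) (y := y) hiso (le_refl (0:ℝ)) h01.le ht₁I.2
          rw [h0] at this
          exact ⟨x, γ t₁, this⟩
        have hfar : ∀ z ∈ γ '' Set.Icc (0:ℝ) t₁, C ≤ Metric.infDist z Y := by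
          rintro z ⟨t, htI, rfl⟩
          rcases eq_or_lt_of_le htI.2 with rfl | hlt
          · exact hend1 h01
          · exact (hlow t htI.1 hlt).le
        have hxmem : x ∈ γ '' Set.Icc (0:ℝ) t₁ := ⟨0, ⟨le_refl _, ht₁I.1⟩, h0⟩
        have ht₁mem : γ t₁ ∈ γ '' Set.Icc (0:ℝ) t₁ :=
          ⟨t₁, ⟨ht₁I.1, le_refl _⟩, rfl⟩
        have happ := hcon _ hseg hfar p₁ (mem_projSetOf ht₁mem hp₁)
          p (mem_projSetOf hxmem hp)
        have hd : dist (γ t₁) p₁ ≤ C := (projSet_dist_eq hp₁).le.trans hφ₁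
        calc dist (γ t₁) p ≤ dist (γ t₁) p₁ + dist p₁ p := dist_triangle _ _ _
          _ ≤ C + C := add_le_add hd happ
          _ = 2*C := by ring
    · intro q hq
      rcases eq_or_lt_of_le ht₂I.2 with h2L | h2L
      · have hyt : γ t₂ = y := by rw [h2L, hLy]
        have h2 : dist (γ t₂) q ≤ C := by
          rw [hyt, projSet_dist_eq hq, ← hyt]
          exact hφ₂
        linarith
      · obtain ⟨q₂, hq₂⟩ := projSet_nonempty hY (γ t₂)
        have hseg : IsGeodesicSegment (γ '' Set.Icc t₂ L) := by
          have := subseg (x := x) (y := y) hiso ht₂I.1 h2L.le (le_refl L)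
          rw [hLy] at this
          exact ⟨γ t₂, y, this⟩
        have hfar : ∀ z ∈ γ '' Set.Icc t₂ L, C ≤ Metric.infDist z Y := by
          rintro z ⟨t, htI, rfl⟩
          rcases eq_or_lt_of_le htI.1 with rfl | hlt
          · exact hend2 h2L
          · exact (hhigh t hlt htI.2).le
        have hymem : y ∈ γ '' Set.Icc t₂ L := ⟨L, ⟨ht₂I.2, le_refl _⟩, hLy⟩
        have ht₂mem : γ t₂ ∈ γ '' Set.Icc t₂ L := ⟨t₂, ⟨le_refl _, ht₂I.2⟩, rfl⟩
        have happ := hcon _ hseg hfar q₂ (mem_projSetOf ht₂mem hq₂)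
          q (mem_projSetOf hymem hq)
        have hd : dist (γ t₂) q₂ ≤ C := (projSet_dist_eq hq₂).le.trans hφ₂
        calc dist (γ t₂) q ≤ dist (γ t₂) q₂ + dist q₂ q := dist_triangle _ _ _
          _ ≤ C + C := add_le_add hd happ
          _ = 2*C := by ring
  · left
    intro p hp q hq
    have hseg : IsGeodesicSegment (γ '' Set.Icc (0:ℝ) L) :=
      ⟨x, y, γ, hiso, h0, hLy, rfl⟩
    have hfar : ∀ z ∈ γ '' Set.Icc (0:ℝ) L, C ≤ Metric.infDist z Y := by
      rintro z ⟨t, htI, rfl⟩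
      by_contra hcc
      push_neg at hcc
      exact hSne ⟨t, htI, hcc.le⟩
    have hxmem : x ∈ γ '' Set.Icc (0:ℝ) L := ⟨0, ⟨le_refl _, hL0⟩, h0⟩
    have hymem : y ∈ γ '' Set.Icc (0:ℝ) L := ⟨L, ⟨hL0, le_refl _⟩, hLy⟩
    exact hcon _ hseg hfar p (mem_projSetOf hxmem hp) q (mem_projSetOf hymem hq)

end Toolkit

section Toolkit2

variable {X : Type*} [MetricSpace X]

/-- **Distance formula**: either the projections of `x, y` on `Y` are `C`-close, or the
distance between `x` and `y` almost decomposes through the projections. -/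
lemma proj_dist_formula [ProperSpace X] {C : ℝ} (hC : 0 ≤ C) {Y : Set X} (hY : Y.Nonempty)
    (hcon : IsContractingWith C Y) (hgeo : GeodesicSpace X) {x y : X}
    {p q : X} (hp : p ∈ projSet Y x) (hq : q ∈ projSet Y y) :
    dist p q ≤ C ∨ dist x p + dist p q + dist q y ≤ dist x y + 8*C := by
  obtain ⟨s, γ, hiso, h0, hLy, -⟩ := hgeo x y
  rcases core_dichotomy hC hY hcon hiso h0 hLy with h | ⟨t₁, t₂, ht₁, ht₂, h12, hsum, hφ₁, hφ₂, h1, h2⟩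
  · exact Or.inl (h p hp q hq)
  · right
    have e1 : dist (γ t₁) p ≤ 2*C := h1 p hp
    have e2 : dist (γ t₂) q ≤ 2*C := h2 q hq
    have d1 : dist x p ≤ dist x (γ t₁) + dist (γ t₁) p := dist_triangle _ _ _
    have d2 : dist p q ≤ dist p (γ t₁) + dist (γ t₁) (γ t₂) + dist (γ t₂) q :=
      dist_triangle4 _ _ _ _
    have d3 : dist q y ≤ dist q (γ t₂) + dist (γ t₂) y := dist_triangle _ _ _
    rw [dist_comm p (γ t₁)] at d2
    rw [dist_comm q (γ t₂)] at d3
    linarith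

/-- Closest-point projection to a contracting set is coarsely Lipschitz. -/
lemma proj_lip [ProperSpace X] {C : ℝ} (hC : 0 ≤ C) {Y : Set X} (hY : Y.Nonempty)
    (hcon : IsContractingWith C Y) (hgeo : GeodesicSpace X) {x y : X}
    {p q : X} (hp : p ∈ projSet Y x) (hq : q ∈ projSet Y y) :
    dist p q ≤ dist x y + 4*C := by
  obtain ⟨s, γ, hiso, h0, hLy, -⟩ := hgeo x y
  rcases core_dichotomy hC hY hcon hiso h0 hLy with h | ⟨t₁, t₂, ht₁, ht₂, h12, hsum, hφ₁, hφ₂, h1, h2⟩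
  · have := h p hp q hq
    have := dist_nonneg (x := x) (y := y)
    linarith
  · have e1 : dist (γ t₁) p ≤ 2*C := h1 p hp
    have e2 : dist (γ t₂) q ≤ 2*C := h2 q hq
    have d2 : dist p q ≤ dist p (γ t₁) + dist (γ t₁) (γ t₂) + dist (γ t₂) q :=
      dist_triangle4 _ _ _ _
    rw [dist_comm p (γ t₁)] at d2
    have m1 : dist (γ t₁) (γ t₂) ≤ dist x y := by
      have := dist_nonneg (x := x) (y := γ t₁)
      have := dist_nonneg (x := γ t₂) (y := y)
      linarith
    linarith

/-- A geodesic whose endpoints are `C`-close to a `C`-contracting set stays in its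
`4C`-neighbourhood. -/
lemma geodesic_in_nbhd [ProperSpace X] {C : ℝ} (hC : 0 ≤ C) {Y : Set X} (hY : Y.Nonempty)
    (hcon : IsContractingWith C Y) {x y : X} {s : Set X} (hs : IsGeodesicFromTo s x y)
    (hx : Metric.infDist x Y ≤ C) (hy : Metric.infDist y Y ≤ C) :
    ∀ z ∈ s, Metric.infDist z Y ≤ 4*C := by
  obtain ⟨γ, hiso, h0, hLy, hsim⟩ := hs
  set L := dist x y with hLdef
  have hL0 : 0 ≤ L := dist_nonneg
  have hlip : ∀ s' ∈ Set.Icc (0:ℝ) L, ∀ t ∈ Set.Icc (0:ℝ) L,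
      Metric.infDist (γ s') Y ≤ Metric.infDist (γ t) Y + |s' - t| := by
    intro s' hs' t ht
    calc Metric.infDist (γ s') Y ≤ Metric.infDist (γ t) Y + dist (γ s') (γ t) :=
          Metric.infDist_le_infDist_add_dist
      _ = Metric.infDist (γ t) Y + |s' - t| := by rw [hiso s' hs' t ht]
  rw [hsim]
  rintro z ⟨t, htI, rfl⟩
  by_cases hφt : Metric.infDist (γ t) Y ≤ C
  · linarith
  push_neg at hφt
  -- last time before t that the geodesic is C-close to Y
  set S₁ : Set ℝ := {u | u ∈ Set.Icc (0:ℝ) t ∧ Metric.infDist (γ u) Y ≤ C} with hS₁def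
  have h0S : (0:ℝ) ∈ S₁ := ⟨⟨le_refl _, htI.1⟩, by rw [h0]; exact hx⟩
  have hS₁ne : S₁.Nonempty := ⟨0, h0S⟩
  have hS₁sub : ∀ u ∈ S₁, u ∈ Set.Icc (0:ℝ) L := fun u hu => ⟨hu.1.1, hu.1.2.trans htI.2⟩
  have hbdd₁ : BddAbove S₁ := ⟨t, fun u hu => hu.1.2⟩
  set a := sSup S₁ with hadef
  have haI : a ∈ Set.Icc (0:ℝ) t := ⟨le_csSup hbdd₁ h0S, csSup_le hS₁ne (fun u hu => hu.1.2)⟩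
  have haL : a ∈ Set.Icc (0:ℝ) L := ⟨haI.1, haI.2.trans htI.2⟩
  have hφa : Metric.infDist (γ a) Y ≤ C := by
    by_contra hcc
    push_neg at hcc
    obtain ⟨u, huS, hult⟩ := Real.add_neg_lt_sSup hS₁ne
      (by linarith : -(Metric.infDist (γ a) Y - C) < 0)
    have h1 : u ≤ a := le_csSup hbdd₁ huS
    have h2 := hlip a haL u (hS₁sub u huS)
    rw [abs_of_nonneg (by linarith)] at h2
    have h3 := huS.2
    linarith
  have hat : a < t := lt_of_le_of_ne haI.2 (fun h => by rw [h] at hφa; linarith)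
  have hlow : ∀ u, a < u → u ≤ t → C < Metric.infDist (γ u) Y := by
    intro u hau hut
    by_contra hcc
    push_neg at hcc
    exact absurd (le_csSup hbdd₁ ⟨⟨haI.1.trans hau.le, hut⟩, hcc⟩) (not_le.2 hau)
  -- first time after t that the geodesic is C-close to Y
  set S₂ : Set ℝ := {u | u ∈ Set.Icc t L ∧ Metric.infDist (γ u) Y ≤ C} with hS₂def
  have hLS : L ∈ S₂ := ⟨⟨htI.2, le_refl _⟩, by rw [hLy]; exact hy⟩
  have hS₂ne : S₂.Nonempty := ⟨L, hLS⟩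
  have hS₂sub : ∀ u ∈ S₂, u ∈ Set.Icc (0:ℝ) L := fun u hu => ⟨htI.1.trans hu.1.1, hu.1.2⟩
  have hbdd₂ : BddBelow S₂ := ⟨t, fun u hu => hu.1.1⟩
  set b := sInf S₂ with hbdef
  have hbI : b ∈ Set.Icc t L := ⟨le_csInf hS₂ne (fun u hu => hu.1.1), csInf_le hbdd₂ hLS⟩
  have hbL : b ∈ Set.Icc (0:ℝ) L := ⟨htI.1.trans hbI.1, hbI.2⟩
  have hφb : Metric.infDist (γ b) Y ≤ C := by
    by_contra hcc
    push_neg at hcc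
    obtain ⟨u, huS, hult⟩ := Real.lt_sInf_add_pos hS₂ne
      (by linarith : (0:ℝ) < Metric.infDist (γ b) Y - C)
    have h1 : b ≤ u := csInf_le hbdd₂ huS
    have h2 := hlip b hbL u (hS₂sub u huS)
    rw [abs_of_nonpos (by linarith)] at h2
    have h3 := huS.2
    linarith
  have htb : t < b := lt_of_le_of_ne hbI.1 (fun h => by rw [← h] at hφb; linarith)
  have hhigh : ∀ u, t ≤ u → u < b → C < Metric.infDist (γ u) Y := by
    intro u htu hub
    by_contra hcc
    push_neg at hcc
    exact absurd (csInf_le hbdd₂ ⟨⟨htu, hub.le.trans hbI.2⟩, hcc⟩) (not_le.2 hub)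
  -- the subsegment [a,b] stays C-far from Y
  have hfar : ∀ z ∈ γ '' Set.Icc a b, C ≤ Metric.infDist z Y := by
    rintro z ⟨u, huI, rfl⟩
    rcases eq_or_lt_of_le huI.1 with hua | hau
    · -- u = a : boundary point, use continuity
      rw [← hua]
      by_contra hcc
      push_neg at hcc
      have hε0 : 0 < C - Metric.infDist (γ a) Y := by linarith
      set u' := min t (a + (C - Metric.infDist (γ a) Y)/2) with hu'def
      have hu'gt : a < u' := lt_min hat (by linarith)
      have hu'le : u' ≤ t := min_le_left _ _
      have hu'I : u' ∈ Set.Icc (0:ℝ) L := ⟨haL.1.trans hu'gt.le, hu'le.trans htI.2⟩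
      have h2 := hlip u' hu'I a haL
      rw [abs_of_nonneg (by linarith)] at h2
      have h3 : u' - a ≤ (C - Metric.infDist (γ a) Y)/2 := by
        have := min_le_right t (a + (C - Metric.infDist (γ a) Y)/2)
        linarith
      have h4 := hlow u' hu'gt hu'le
      linarith
    · rcases eq_or_lt_of_le huI.2 with hub | hub
      · -- u = b
        rw [hub]
        by_contra hcc
        push_neg at hcc
        have hε0 : 0 < C - Metric.infDist (γ b) Y := by linarith
        set u' := max t (b - (C - Metric.infDist (γ b) Y)/2) with hu'def
        have hu'lt : u' < b := max_lt htb (by linarith)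
        have hu'ge : t ≤ u' := le_max_left _ _
        have hu'I : u' ∈ Set.Icc (0:ℝ) L := ⟨htI.1.trans hu'ge, hu'lt.le.trans hbL.2⟩
        have h2 := hlip u' hu'I b hbL
        rw [abs_of_nonpos (by linarith)] at h2
        have h3 : b - u' ≤ (C - Metric.infDist (γ b) Y)/2 := by
          have := le_max_right t (b - (C - Metric.infDist (γ b) Y)/2)
          linarith
        have h4 := hhigh u' hu'ge hu'lt
        linarith
      · -- a < u < b
        rcases le_or_gt u t with hut | htu
        · exact (hlow u hau hut).le
        · exact (hhigh u htu.le hub).le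
  have hseg : IsGeodesicSegment (γ '' Set.Icc a b) :=
    ⟨γ a, γ b, subseg (x := x) (y := y) hiso haL.1 (hat.le.trans htb.le) hbL.2⟩
  obtain ⟨pa, hpa⟩ := projSet_nonempty hY (γ a)
  obtain ⟨pb, hpb⟩ := projSet_nonempty hY (γ b)
  have hamem : γ a ∈ γ '' Set.Icc a b := ⟨a, ⟨le_refl _, hat.le.trans htb.le⟩, rfl⟩
  have hbmem : γ b ∈ γ '' Set.Icc a b := ⟨b, ⟨hat.le.trans htb.le, le_refl _⟩, rfl⟩
  have happ := hcon _ hseg hfar pa (mem_projSetOf hamem hpa) pb (mem_projSetOf hbmem hpb)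
  have hdab : dist (γ a) (γ b) = b - a := by
    rw [hiso a haL b hbL, abs_sub_comm, abs_of_nonneg (by linarith)]
  have hba : b - a ≤ 3*C := by
    have t1 : dist (γ a) (γ b) ≤ dist (γ a) pa + dist pa pb + dist pb (γ b) :=
      dist_triangle4 _ _ _ _
    have t2 : dist (γ a) pa ≤ C := (projSet_dist_eq hpa).le.trans hφa
    have t3 : dist pb (γ b) ≤ C := by
      rw [dist_comm]
      exact (projSet_dist_eq hpb).le.trans hφb
    linarith [hdab ▸ t1]
  have hfin := hlip t htI a haL
  rw [abs_of_nonneg (by linarith)] at hfin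
  linarith

end Toolkit2

section Equivariance

variable {G : Type*} {X : Type*} [Group G] [MetricSpace X] [MulAction G X]

lemma smul_dist (hiso : ∀ g : G, Isometry fun x : X => g • x) (v : G) (x y : X) :
    dist (v • x) (v • y) = dist x y :=
  (hiso v).dist_eq x y

/-- Translation by a group element as a homeomorphism. -/
def smulHomeo (hiso : ∀ g : G, Isometry fun x : X => g • x) (v : G) : X ≃ₜ X where
  toFun := fun x => v • x
  invFun := fun x => v⁻¹ • x
  left_inv := fun x => inv_smul_smul v x
  right_inv := fun x => smul_inv_smul v x
  continuous_toFun := (hiso v).continuous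
  continuous_invFun := (hiso v⁻¹).continuous

lemma mlsClosure_smul (hiso : ∀ g : G, Isometry fun x : X => g • x) (v : G) (Y : Set X) :
    closure ((fun x => v • x) '' Y) = (fun x => v • x) '' closure Y :=
  ((smulHomeo hiso v).image_closure Y).symm

lemma infDist_smul (hiso : ∀ g : G, Isometry fun x : X => g • x) (v : G) (Y : Set X) (x : X) :
    Metric.infDist (v • x) ((fun x => v • x) '' Y) = Metric.infDist x Y :=
  Metric.infDist_image (hiso v)

lemma projSet_smul (hiso : ∀ g : G, Isometry fun x : X => g • x) (v : G) (Y : Set X) (x : X) :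
    projSet ((fun x => v • x) '' Y) (v • x) = (fun x => v • x) '' projSet Y x := by
  ext z
  constructor
  · rintro ⟨hz1, hz2⟩
    rw [mlsClosure_smul hiso] at hz1
    obtain ⟨w, hw, rfl⟩ := hz1
    refine ⟨w, ⟨hw, ?_⟩, rfl⟩
    rw [← smul_dist hiso v x w, hz2, infDist_smul hiso]
  · rintro ⟨w, ⟨hw1, hw2⟩, rfl⟩
    constructor
    · rw [mlsClosure_smul hiso]
      exact ⟨w, hw1, rfl⟩
    · rw [smul_dist hiso, infDist_smul hiso]
      exact hw2

lemma geodesic_smul (hiso : ∀ g : G, Isometry fun x : X => g • x) (v : G)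
    {s : Set X} {x y : X} (h : IsGeodesicFromTo s x y) :
    IsGeodesicFromTo ((fun x => v • x) '' s) (v • x) (v • y) := by
  obtain ⟨γ, hγiso, h0, hL, him⟩ := h
  have hd : dist (v • x) (v • y) = dist x y := smul_dist hiso v x y
  refine ⟨fun t => v • γ t, ?_, by show v • γ 0 = v • x; rw [h0], ?_, ?_⟩
  · intro u hu w hw
    rw [hd] at hu hw
    rw [smul_dist hiso, hγiso u hu w hw]
  · rw [hd]
    show v • γ (dist x y) = v • y
    rw [hL]
  · rw [hd, him, Set.image_image]

lemma contracting_smul (hiso : ∀ g : G, Isometry fun x : X => g • x) (v : G)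
    {C : ℝ} {Y : Set X} (hcon : IsContractingWith C Y) :
    IsContractingWith C ((fun x => v • x) '' Y) := by
  intro s hseg hfar p hp q hq
  obtain ⟨x, y, hxy⟩ := hseg
  have hs' : IsGeodesicFromTo ((fun z => v⁻¹ • z) '' s) (v⁻¹ • x) (v⁻¹ • y) :=
    geodesic_smul hiso v⁻¹ hxy
  have hback : (fun z => v • z) '' ((fun z => v⁻¹ • z) '' s) = s := by
    rw [Set.image_image]
    simp [smul_inv_smul]
  have hfar' : ∀ z ∈ (fun z => v⁻¹ • z) '' s, C ≤ Metric.infDist z Y := by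
    rintro z ⟨w, hw, rfl⟩
    have := hfar w hw
    rwa [← infDist_smul hiso v⁻¹ ((fun x => v • x) '' Y) w, Set.image_image,
      (by simp [inv_smul_smul] : (fun x => v⁻¹ • v • x) '' Y = Y)] at this
  -- pull back the projection points
  have hpull : ∀ r ∈ projSetOf ((fun x => v • x) '' Y) s,
      ∃ r' ∈ projSetOf Y ((fun z => v⁻¹ • z) '' s), r = v • r' := by
    intro r hr
    obtain ⟨w, hw, hrw⟩ := Set.mem_iUnion₂.1 hr
    have hw' : w = v • (v⁻¹ • w) := (smul_inv_smul v w).symm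
    rw [hw'] at hrw
    rw [projSet_smul hiso] at hrw
    obtain ⟨r', hr', rfl⟩ := hrw
    exact ⟨r', mem_projSetOf ⟨w, hw, rfl⟩ hr', rfl⟩
  obtain ⟨p', hp', rfl⟩ := hpull p hp
  obtain ⟨q', hq', rfl⟩ := hpull q hq
  rw [smul_dist hiso]
  exact hcon _ ⟨_, _, hs'⟩ hfar' p' hp' q' hq'

lemma smul_cyclicOrbit (g : G) (o : X) (k : ℤ) :
    (fun x => (g ^ k) • x) '' cyclicOrbit g o = cyclicOrbit g o := by
  ext z
  constructor
  · rintro ⟨w, ⟨n, rfl⟩, rfl⟩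
    exact ⟨k + n, by show g ^ (k + n) • o = g ^ k • g ^ n • o; rw [zpow_add, mul_smul]⟩
  · rintro ⟨n, rfl⟩
    refine ⟨(g ^ (n - k)) • o, ⟨n - k, rfl⟩, ?_⟩
    show g ^ k • g ^ (n - k) • o = g ^ n • o
    rw [← mul_smul, ← zpow_add, show k + (n - k) = n by ring]

lemma mem_cyclicOrbit (g : G) (o : X) (n : ℤ) : (g ^ n) • o ∈ cyclicOrbit g o := ⟨n, rfl⟩

lemma cyclicOrbit_nonempty (g : G) (o : X) : (cyclicOrbit g o).Nonempty :=
  ⟨o, 0, by simp⟩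

lemma o_mem_cyclicOrbit (g : G) (o : X) : o ∈ cyclicOrbit g o := ⟨0, by simp⟩

end Equivariance

section ChainLemma

variable {X : Type*} [MetricSpace X] [ProperSpace X]

/-- **Chain lemma**: a chain of uniformly contracting pieces, each traversed over length
`≥ L`, with entrance alignment (H2) and no-backtracking (H4) conditions, is almost
additive, and the projection of the start point to the last piece lies near its
entrance. -/
lemma chain_lemma (hgeo : GeodesicSpace X)
    {C τ L : ℝ} (hC : 0 ≤ C) (hτ : 0 ≤ τ) (hL : 5*τ + 18*C < L)
    (V : ℕ → Set X) (α β : ℕ → X) :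
    ∀ M, 1 ≤ M →
    (∀ i, 1 ≤ i → i ≤ M → (V i).Nonempty ∧ IsContractingWith C (V i) ∧
      α i ∈ V i ∧ β i ∈ V i ∧ L ≤ dist (α i) (β i)) →
    (∀ i, 1 ≤ i → i ≤ M → ∀ p ∈ projSet (V i) (β (i-1)), dist p (α i) ≤ τ) →
    (∀ i, 1 ≤ i → i < M → ∀ y ∈ closure (V (i+1)), ∀ p ∈ projSet (V i) y,
      dist p (β i) ≤ τ) →
    (∀ q ∈ projSet (V M) (β 0), dist q (α M) ≤ 4*τ + 16*C) ∧
    (∑ i ∈ Finset.range M, (dist (β i) (α (i+1)) + dist (α (i+1)) (β (i+1))))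
      - M * (4*τ + 24*C) ≤ dist (β 0) (β M) := by
  intro M hM
  induction M, hM using Nat.le_induction with
  | base =>
    intro hV hH2 hH4
    obtain ⟨hne, hcon, hα, hβ, hlen⟩ := hV 1 le_rfl le_rfl
    have hΦ : ∀ q ∈ projSet (V 1) (β 0), dist q (α 1) ≤ 4*τ + 16*C := by
      intro q hq
      have := hH2 1 le_rfl le_rfl q hq
      linarith
    refine ⟨hΦ, ?_⟩
    obtain ⟨q, hq⟩ := projSet_nonempty hne (β 0)
    have hqα : dist q (α 1) ≤ τ := hH2 1 le_rfl le_rfl q hq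
    have hβself : β 1 ∈ projSet (V 1) (β 1) := mem_projSet_self hne (subset_closure hβ)
    have hqβ : L - τ ≤ dist q (β 1) := by
      have := dist_triangle (α 1) q (β 1)
      rw [dist_comm (α 1) q] at this
      linarith
    rcases proj_dist_formula hC hne hcon hgeo hq hβself with hsmall | hbig
    · linarith
    · have h1 : dist (β 0) (α 1) - τ ≤ dist (β 0) q := by
        have := dist_triangle (β 0) q (α 1)
        linarith
      have h2 : dist (α 1) (β 1) - τ ≤ dist q (β 1) := by
        have := dist_triangle (α 1) q (β 1)
        rw [dist_comm (α 1) q] at this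
        linarith
      simp only [Finset.sum_range_one, Nat.cast_one]
      have hz : dist (β 1) (β 1) = 0 := dist_self _
      linarith
  | succ M hM IH =>
    intro hV hH2 hH4
    have hVr : ∀ i, 1 ≤ i → i ≤ M → (V i).Nonempty ∧ IsContractingWith C (V i) ∧
        α i ∈ V i ∧ β i ∈ V i ∧ L ≤ dist (α i) (β i) :=
      fun i h1 h2 => hV i h1 (h2.trans (Nat.le_succ M))
    have hH2r : ∀ i, 1 ≤ i → i ≤ M → ∀ p ∈ projSet (V i) (β (i-1)), dist p (α i) ≤ τ :=
      fun i h1 h2 => hH2 i h1 (h2.trans (Nat.le_succ M))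
    have hH4r : ∀ i, 1 ≤ i → i < M → ∀ y ∈ closure (V (i+1)), ∀ p ∈ projSet (V i) y,
        dist p (β i) ≤ τ :=
      fun i h1 h2 => hH4 i h1 (h2.trans (Nat.lt_succ_self M))
    obtain ⟨hΦM, hlenM⟩ := IH hVr hH2r hH4r
    obtain ⟨hMne, hMcon, hMα, hMβ, hMlen⟩ := hV M hM (Nat.le_succ M)
    obtain ⟨hne, hcon, hα, hβ, hlen⟩ := hV (M+1) (by omega) le_rfl
    -- (*) : going past the M-th piece
    have hstar : ∀ y ∈ closure (V (M+1)),
        dist (β 0) (β M) + dist (β M) y - (2*τ + 8*C) ≤ dist (β 0) y := by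
      intro y hy
      obtain ⟨q'', hq''⟩ := projSet_nonempty hMne (β 0)
      obtain ⟨p'', hp''⟩ := projSet_nonempty hMne y
      have hq''α : dist q'' (α M) ≤ 4*τ + 16*C := hΦM q'' hq''
      have hp''β : dist p'' (β M) ≤ τ := hH4 M hM (Nat.lt_succ_self M) y hy p'' hp''
      rcases proj_dist_formula hC hMne hMcon hgeo hq'' hp'' with hsmall | hbig
      · exfalso
        have h1 : dist (α M) (β M) ≤ dist (α M) q'' + dist q'' p'' + dist p'' (β M) :=
          dist_triangle4 _ _ _ _
        rw [dist_comm (α M) q''] at h1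
        linarith
      · have h1 : dist (β 0) (β M) - dist q'' (β M) ≤ dist (β 0) q'' := by
          have := dist_triangle (β 0) q'' (β M)
          linarith
        have h2 : dist q'' (β M) - τ ≤ dist q'' p'' := by
          have := dist_triangle q'' p'' (β M)
          linarith
        have h3 : dist (β M) y - τ ≤ dist p'' y := by
          have := dist_triangle (β M) p'' y
          rw [dist_comm (β M) p''] at this
          linarith
        linarith
    -- Ω_loc : the (M+1)-st piece is entirely behind its entrance, seen from β M
    have hΩ : ∀ y ∈ closure (V (M+1)),
        dist (β M) (α (M+1)) + dist (α (M+1)) y - (2*τ + 8*C) ≤ dist (β M) y := by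
      intro y hy
      obtain ⟨p, hp⟩ := projSet_nonempty hne (β M)
      have hpα : dist p (α (M+1)) ≤ τ := by
        have := hH2 (M+1) (by omega) le_rfl p
        rw [Nat.add_sub_cancel] at this
        exact this hp
      have hyself : y ∈ projSet (V (M+1)) y := mem_projSet_self hne hy
      rcases proj_dist_formula hC hne hcon hgeo hp hyself with hsmall | hbig
      · have h1 : dist (α (M+1)) y ≤ τ + C := by
          have := dist_triangle (α (M+1)) p y
          rw [dist_comm (α (M+1)) p] at this
          linarith
        have h2 : dist (β M) (α (M+1)) - dist (α (M+1)) y ≤ dist (β M) y := by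
          have := dist_triangle (β M) y (α (M+1))
          rw [dist_comm y (α (M+1))] at this
          linarith
        linarith
      · have h1 : dist (β M) (α (M+1)) - τ ≤ dist (β M) p := by
          have := dist_triangle (β M) p (α (M+1))
          linarith
        have h2 : dist (α (M+1)) y - τ ≤ dist p y := by
          have := dist_triangle (α (M+1)) p y
          rw [dist_comm (α (M+1)) p] at this
          linarith
        have hz : dist y y = 0 := dist_self _
        linarith
    constructor
    · -- Φ (M+1)
      intro q hq
      have hqc : q ∈ closure (V (M+1)) := hq.1
      have hupper : dist (β 0) q ≤ dist (β 0) (β M) + dist (β M) (α (M+1)) := by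
        have h1 : dist (β 0) q ≤ dist (β 0) (α (M+1)) := by
          rw [projSet_dist_eq hq]
          exact Metric.infDist_le_dist_of_mem hα
        exact h1.trans (dist_triangle _ _ _)
      have hlow := hstar q hqc
      have hlow2 := hΩ q hqc
      have hcomm : dist q (α (M+1)) = dist (α (M+1)) q := dist_comm _ _
      linarith
    · -- length estimate
      rw [Finset.sum_range_succ]
      have hs := hstar (β (M+1)) (subset_closure hβ)
      have hO := hΩ (β (M+1)) (subset_closure hβ)
      push_cast
      linarith

end ChainLemma

section OrbitLemmas

variable {G : Type*} {X : Type*} [Group G] [MetricSpace X] [ProperSpace X] [MulAction G X]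

lemma contracting_mono {X' : Type*} [MetricSpace X'] {C C' : ℝ} {Y : Set X'}
    (hcon : IsContractingWith C Y) (hle : C ≤ C') : IsContractingWith C' Y :=
  fun s hs hfar p hp q hq =>
    (hcon s hs (fun x hx => hle.trans (hfar x hx)) p hp q hq).trans hle

lemma projSet_of_mem {X' : Type*} [MetricSpace X'] {Y : Set X'} {x p : X'} (hx : x ∈ Y)
    (hp : p ∈ projSet Y x) : p = x := by
  have h1 : dist x p = 0 := by
    rw [projSet_dist_eq hp, Metric.infDist_zero_of_mem hx]
  rw [dist_comm] at h1
  exact dist_eq_zero.1 h1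

/-- Extending a projection bound from a set to its closure. -/
lemma proj_bound_closure (hgeo : GeodesicSpace X) {C : ℝ} (hC : 0 ≤ C)
    {Λ : Set X} (hΛne : Λ.Nonempty) (hcon : IsContractingWith C Λ)
    {S : Set X} {o : X} {J : ℝ}
    (hS : ∀ y ∈ S, ∀ p ∈ projSet Λ y, dist o p ≤ J) :
    ∀ y ∈ closure S, ∀ p ∈ projSet Λ y, dist o p ≤ J + 4*C := by
  intro y hy p hp
  refine le_of_forall_pos_le_add ?_
  intro ε hε
  obtain ⟨y', hy'S, hyy'⟩ := Metric.mem_closure_iff.1 hy ε hε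
  obtain ⟨q, hq⟩ := projSet_nonempty hΛne y'
  have h1 : dist p q ≤ dist y y' + 4*C := proj_lip hC hΛne hcon hgeo hp hq
  have h2 : dist o q ≤ J := hS y' hy'S q hq
  have h3 : dist o p ≤ dist o q + dist q p := dist_triangle _ _ _
  rw [dist_comm q p] at h3
  linarith

/-- **Two-axis dichotomy**: given two weakly independent contracting orbits, every point
projects close to the basepoint on at least one of the two axes. -/
lemma axis_dichotomy (hiso : ∀ g : G, Isometry fun x : X => g • x) (hgeo : GeodesicSpace X)
    (o : X) {g h : G} {C : ℝ} (hC : 0 ≤ C)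
    (hconA : IsContractingWith C (cyclicOrbit g o))
    (hconB : IsContractingWith C (cyclicOrbit h o))
    (hwi : WeaklyIndependent o g h) :
    ∃ T : ℝ, 0 ≤ T ∧ C ≤ T ∧ ∀ x : X,
      (∀ p ∈ projSet (cyclicOrbit g o) x, dist o p ≤ T) ∨
      (∀ p ∈ projSet (cyclicOrbit h o) x, dist o p ≤ T) := by
  obtain ⟨R, hR⟩ := hwi
  set A := cyclicOrbit g o with hA
  set B := cyclicOrbit h o with hB
  have hAne : A.Nonempty := cyclicOrbit_nonempty g o
  have hBne : B.Nonempty := cyclicOrbit_nonempty h o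
  have hoA : o ∈ A := o_mem_cyclicOrbit g o
  have hoB : o ∈ B := o_mem_cyclicOrbit h o
  set T := max (R (4*C)) 0 + 4*C + 1 with hT
  have hT0 : 0 ≤ T := by
    have := le_max_right (R (4*C)) 0
    simp only [hT]
    linarith
  have hTC : C ≤ T := by
    have := le_max_right (R (4*C)) 0
    simp only [hT]
    linarith
  refine ⟨T, hT0, hTC, ?_⟩
  intro x
  by_contra hcc
  push_neg at hcc
  obtain ⟨⟨p, hp, hpT⟩, ⟨q, hq, hqT⟩⟩ := hcc
  obtain ⟨s, γ, hγiso, h0, hLx, hsim⟩ := hgeo o x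
  set L := dist o x with hL
  -- analysis with respect to A
  have hoselfA : o ∈ projSet A o := mem_projSet_self hAne (subset_closure hoA)
  rcases core_dichotomy hC hAne hconA hγiso h0 hLx with hleft | ⟨t₁, t₂, ht₁, ht₂, h12, hsum, hφ₁, hφ₂, h1, h2⟩
  · have hsm : dist o p ≤ C := hleft o hoselfA p hp
    linarith
  have hA1 : dist (γ t₁) o ≤ 2*C := h1 o hoselfA
  have hA2 : dist (γ t₂) p ≤ 2*C := h2 p hp
  -- analysis with respect to B
  have hoselfB : o ∈ projSet B o := mem_projSet_self hBne (subset_closure hoB)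
  rcases core_dichotomy hC hBne hconB hγiso h0 hLx with hleft | ⟨t₁', t₂', ht₁', ht₂', h12', hsum', hφ₁', hφ₂', h1', h2'⟩
  · have hsm : dist o q ≤ C := hleft o hoselfB q hq
    linarith
  have hB1 : dist (γ t₁') o ≤ 2*C := h1' o hoselfB
  have hB2 : dist (γ t₂') q ≤ 2*C := h2' q hq
  -- parameters are distances from o
  have hpar : ∀ t ∈ Set.Icc (0:ℝ) L, dist o (γ t) = t := by
    intro t ht
    rw [← h0, hγiso 0 ⟨le_refl _, ht.1.trans ht.2⟩ t ht, abs_sub_comm, sub_zero,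
      abs_of_nonneg ht.1]
  have ht₁small : t₁ ≤ 2*C := by
    have := hpar t₁ ht₁
    rw [dist_comm] at hA1
    linarith
  have ht₁small' : t₁' ≤ 2*C := by
    have := hpar t₁' ht₁'
    rw [dist_comm] at hB1
    linarith
  have ht₂big : T - 2*C < t₂ := by
    have h3 : dist o p ≤ dist o (γ t₂) + dist (γ t₂) p := dist_triangle _ _ _
    have := hpar t₂ ht₂
    linarith
  have ht₂big' : T - 2*C < t₂' := by
    have h3 : dist o q ≤ dist o (γ t₂') + dist (γ t₂') q := dist_triangle _ _ _
    have := hpar t₂' ht₂'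
    linarith
  -- the subsegments stay 4C-close to the axes
  have hgeoseg : ∀ a b : ℝ, 0 ≤ a → a ≤ b → b ≤ L →
      IsGeodesicFromTo (γ '' Set.Icc a b) (γ a) (γ b) :=
    fun a b h0a hab hbL => subseg (x := o) (y := x) hγiso h0a hab hbL
  have hnearA : ∀ t ∈ Set.Icc t₁ t₂, Metric.infDist (γ t) A ≤ 4*C := by
    intro t ht
    have := geodesic_in_nbhd hC hAne hconA (hgeoseg t₁ t₂ ht₁.1 h12 ht₂.2) hφ₁ hφ₂
    exact this (γ t) ⟨t, ht, rfl⟩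
  have hnearB : ∀ t ∈ Set.Icc t₁' t₂', Metric.infDist (γ t) B ≤ 4*C := by
    intro t ht
    have := geodesic_in_nbhd hC hBne hconB (hgeoseg t₁' t₂' ht₁'.1 h12' ht₂'.2) hφ₁' hφ₂'
    exact this (γ t) ⟨t, ht, rfl⟩
  -- two far-apart points in the common neighbourhood
  set s₀ := max t₁ t₁' with hs₀
  set s₁ := min t₂ t₂' with hs₁
  have hs₀le : s₀ ≤ 2*C := max_le ht₁small ht₁small'
  have hs₁ge : T - 2*C < s₁ := lt_min ht₂big ht₂big'
  have hs₀s₁ : s₀ ≤ s₁ := by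
    have : (2:ℝ)*C ≤ T - 2*C := by
      have := le_max_right (R (4*C)) 0
      simp only [hT]
      linarith
    linarith
  have hs₀I : s₀ ∈ Set.Icc t₁ t₂ := ⟨le_max_left _ _, hs₀s₁.trans (min_le_left _ _)⟩
  have hs₀I' : s₀ ∈ Set.Icc t₁' t₂' := ⟨le_max_right _ _, hs₀s₁.trans (min_le_right _ _)⟩
  have hs₁I : s₁ ∈ Set.Icc t₁ t₂ := ⟨(le_max_left _ _).trans hs₀s₁, min_le_left _ _⟩
  have hs₁I' : s₁ ∈ Set.Icc t₁' t₂' := ⟨(le_max_right _ _).trans hs₀s₁, min_le_right _ _⟩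
  have hmem0 : γ s₀ ∈ ptNbhd (4*C) A ∩ ptNbhd (4*C) B :=
    ⟨hnearA s₀ hs₀I, hnearB s₀ hs₀I'⟩
  have hmem1 : γ s₁ ∈ ptNbhd (4*C) A ∩ ptNbhd (4*C) B :=
    ⟨hnearA s₁ hs₁I, hnearB s₁ hs₁I'⟩
  have hfar : dist (γ s₀) (γ s₁) ≤ R (4*C) :=
    hR (4*C) (by linarith) _ hmem0 _ hmem1
  have hs₀L : s₀ ∈ Set.Icc (0:ℝ) L := ⟨le_trans ht₁.1 (le_max_left _ _), hs₀s₁.trans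
    ((min_le_left _ _).trans ht₂.2)⟩
  have hs₁L : s₁ ∈ Set.Icc (0:ℝ) L := ⟨le_trans hs₀L.1 hs₀s₁, (min_le_left _ _).trans ht₂.2⟩
  have hdist : dist (γ s₀) (γ s₁) = s₁ - s₀ := by
    rw [hγiso s₀ hs₀L s₁ hs₁L, abs_sub_comm, abs_of_nonneg (by linarith)]
  have hRle : R (4*C) ≤ max (R (4*C)) 0 := le_max_left _ _
  simp only [hT] at hs₁ge
  linarith
/-- Projections of one axis onto the other stay near the basepoint. -/
lemma cross_proj_bound (hiso : ∀ g : G, Isometry fun x : X => g • x) (hgeo : GeodesicSpace X)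
    (o : X) {g h : G} {C T : ℝ} (hC : 0 ≤ C)
    (hconA : IsContractingWith C (cyclicOrbit g o))
    (hdi : ∀ x : X, (∀ p ∈ projSet (cyclicOrbit g o) x, dist o p ≤ T) ∨
      (∀ p ∈ projSet (cyclicOrbit h o) x, dist o p ≤ T)) :
    ∀ y ∈ cyclicOrbit h o, ∀ p ∈ projSet (cyclicOrbit g o) y, dist o p ≤ T + 4*C := by
  intro y hy p hp
  set A := cyclicOrbit g o with hA
  have hAne : A.Nonempty := cyclicOrbit_nonempty g o
  have hBne : (cyclicOrbit h o).Nonempty := cyclicOrbit_nonempty h o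
  rcases hdi y with hside | hside
  · have := hside p hp
    have h4 : 0 ≤ 4*C := by linarith
    linarith
  · -- y itself is its own projection to B, so y is T-close to o
    have hyy : y ∈ projSet (cyclicOrbit h o) y := mem_projSet_self hBne (subset_closure hy)
    have hyo : dist o y ≤ T := hside y hyy
    have hoA : o ∈ projSet A o :=
      mem_projSet_self hAne (subset_closure (o_mem_cyclicOrbit g o))
    have := proj_lip hC hAne hconA hgeo hp hoA
    have h3 : dist o p ≤ dist p o + 0 := by rw [dist_comm]; linarith [dist_nonneg (x := o) (y := p)]
    have h4 : dist p o ≤ dist y o + 4*C := this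
    rw [dist_comm y o] at h4
    linarith

/-- **No-wrap lemma**: if `w` is aligned with respect to the axis of `a` (seen from both
sides) and has large displacement, then the whole translated axis `w⟨a⟩o` projects to a
second contracting set `Λ` near the projection of `w•o`, i.e. near the basepoint. -/
lemma no_wrap (hiso : ∀ g : G, Isometry fun x : X => g • x) (hgeo : GeodesicSpace X)
    (o : X) {a : G} {Λ : Set X} {C T : ℝ} (hC : 0 ≤ C) (hT : 0 ≤ T)
    (hconA : IsContractingWith C (cyclicOrbit a o))
    (hconΛ : IsContractingWith C Λ) (hΛne : Λ.Nonempty)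
    {w : G}
    (hcrit1 : ∀ p ∈ projSet (cyclicOrbit a o) (w⁻¹ • o), dist o p ≤ T)
    (hcrit2 : ∀ p ∈ projSet Λ (w • o), dist o p ≤ T)
    (hδ : 2*T + 6*C < dist o (w • o)) :
    ∀ k : ℤ, ∀ q ∈ projSet Λ ((w * a^k) • o), dist o q ≤ T + C := by
  intro k q hq
  set A := cyclicOrbit a o with hA
  have hAne : A.Nonempty := cyclicOrbit_nonempty a o
  set wA := (fun x => w • x) '' A with hwA
  have hwAne : wA.Nonempty := hAne.image _
  have hwAcon : IsContractingWith C wA := contracting_smul hiso w hconA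
  set x₁ := w • o with hx₁
  set x₂ := (w * a^k) • o with hx₂
  have hx₁mem : x₁ ∈ wA := ⟨o, o_mem_cyclicOrbit a o, rfl⟩
  have hx₂mem : x₂ ∈ wA := ⟨(a^k) • o, mem_cyclicOrbit a o k, by rw [hx₂, mul_smul]⟩
  obtain ⟨s, γ, hγiso, h0, hLx, hsim⟩ := hgeo x₁ x₂
  have hnear : ∀ z ∈ s, Metric.infDist z wA ≤ 4*C := by
    apply geodesic_in_nbhd hC hwAne hwAcon ⟨γ, hγiso, h0, hLx, hsim⟩
    · rw [Metric.infDist_zero_of_mem hx₁mem]; exact hC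
    · rw [Metric.infDist_zero_of_mem hx₂mem]; exact hC
  obtain ⟨p₀, hp₀⟩ := projSet_nonempty hΛne x₁
  rcases core_dichotomy hC hΛne hconΛ hγiso h0 hLx with hleft | ⟨t₁, t₂, ht₁, ht₂, h12, hsum, hφ₁, hφ₂, h1, h2⟩
  · have hsmall : dist p₀ q ≤ C := hleft p₀ hp₀ q hq
    have h3 : dist o q ≤ dist o p₀ + dist p₀ q := dist_triangle _ _ _
    have h4 : dist o p₀ ≤ T := hcrit2 p₀ hp₀
    linarith
  · exfalso
    -- first-entry point is close to o and to wA: contradiction with large displacement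
    have hγt₁p₀ : dist (γ t₁) p₀ ≤ 2*C := h1 p₀ hp₀
    have hop₀ : dist o p₀ ≤ T := hcrit2 p₀ hp₀
    have hγt₁s : γ t₁ ∈ s := by rw [hsim]; exact ⟨t₁, ht₁, rfl⟩
    have hγt₁wA : Metric.infDist (γ t₁) wA ≤ 4*C := hnear _ hγt₁s
    have hinfo : Metric.infDist o wA ≤ T + 6*C := by
      have htr : Metric.infDist o wA ≤ Metric.infDist (γ t₁) wA + dist o (γ t₁) :=
        Metric.infDist_le_infDist_add_dist
      have h3 : dist o (γ t₁) ≤ dist o p₀ + dist p₀ (γ t₁) := dist_triangle _ _ _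
      rw [dist_comm p₀ (γ t₁)] at h3
      linarith
    obtain ⟨r, hr⟩ := projSet_nonempty hwAne o
    have hor : dist o r ≤ T + 6*C := by
      rw [projSet_dist_eq hr]; exact hinfo
    -- r is the image of a projection of w⁻¹ • o
    have hrw : dist r (w • o) ≤ T := by
      have ho' : o = w • (w⁻¹ • o) := by rw [smul_inv_smul]
      have : r ∈ projSet wA (w • (w⁻¹ • o)) := by rw [← ho']; exact hr
      rw [projSet_smul hiso] at this
      obtain ⟨r', hr', rfl⟩ := this
      have := hcrit1 r' hr'
      rw [← smul_dist hiso w o r', dist_comm (w • o) (w • r')] at this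
      exact this
    have : dist o (w • o) ≤ dist o r + dist r (w • o) := dist_triangle _ _ _
    linarith

end OrbitLemmas

section Estimates

variable {G : Type*} {X : Type*} [Group G] [MetricSpace X] [ProperSpace X] [MulAction G X]

lemma projSet_axis_shift (hiso : ∀ g : G, Isometry fun x : X => g • x) (a : G) (o : X)
    (k : ℤ) (x : X) :
    projSet (cyclicOrbit a o) ((a^k) • x) =
      (fun z => (a^k) • z) '' projSet (cyclicOrbit a o) x := by
  conv_lhs => rw [← smul_cyclicOrbit a o k]
  exact projSet_smul hiso (a^k) _ x

lemma stableLength_nonneg (o : X) (u : G) : 0 ≤ stableLength o u :=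
  le_ciInf (fun n => by positivity)

lemma le_stableLength {o : X} {u : G} {d : ℝ}
    (hd : ∀ m : ℕ, 1 ≤ m → (m:ℝ) * d ≤ dist o ((u^m) • o)) : d ≤ stableLength o u := by
  refine le_ciInf (fun m => ?_)
  have hm0 : (0:ℝ) < ((m:ℕ+):ℕ) := by exact_mod_cast m.property
  rw [le_div_iff₀ hm0]
  have := hd (m:ℕ) m.property
  linarith [this]

lemma dist_zpow_lower {o : X} {a : G} {K c : ℝ}
    (hQI : ∀ m n : ℤ, |(m:ℝ)-(n:ℝ)|/K - c ≤ dist ((a^m) • o) ((a^n) • o)) (N : ℕ) :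
    (N:ℝ)/K - c ≤ dist o ((a^(N:ℕ)) • o) := by
  have h := hQI 0 (N:ℤ)
  rw [zpow_zero, one_smul, zpow_natCast] at h
  simpa using h

lemma sum_pair_lower (s : ℕ → ℝ) (A B : ℝ) (n : ℕ)
    (hA : ∀ j, j < n → A ≤ s (2*j)) (hB : ∀ j, j < n → B ≤ s (2*j+1)) :
    (n:ℝ) * (A + B) ≤ ∑ i ∈ Finset.range (2*n), s i := by
  induction n with
  | zero => simp
  | succ n IH =>
    have IH' := IH (fun j hj => hA j (hj.trans (Nat.lt_succ_self n)))
      (fun j hj => hB j (hj.trans (Nat.lt_succ_self n)))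
    rw [show 2*(n+1) = (2*n)+1+1 by ring, Finset.sum_range_succ, Finset.sum_range_succ]
    have h1 := hA n (Nat.lt_succ_self n)
    have h2 := hB n (Nat.lt_succ_self n)
    have hexp : ((n:ℝ)+1) * (A + B) = (n:ℝ)*(A+B) + (A + B) := by ring
    push_cast
    push_cast at IH'
    linarith

/-- **Same-axis estimate**: if both `w⁻¹ • o` and `w • o` project near `o` on the axis of
`a`, and `w` has large displacement, then `w · a^N · a^N` has stable length at least
`d(o, w • o)`. -/
lemma same_axis_estimate (hiso : ∀ g : G, Isometry fun x : X => g • x)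
    (hgeo : GeodesicSpace X) (o : X) {a : G} {C T K c : ℝ}
    (hC : 0 ≤ C) (hT : 0 ≤ T) (hK : 1 ≤ K) (hc : 0 ≤ c)
    (hconA : IsContractingWith C (cyclicOrbit a o))
    (hQI : ∀ m n : ℤ, |(m:ℝ)-(n:ℝ)|/K - c ≤ dist ((a^m) • o) ((a^n) • o))
    {w : G} {N : ℕ}
    (hN : 5*(T + 8*C) + 30*C + c + 1 ≤ (N:ℝ)/K)
    (hcrit1 : ∀ p ∈ projSet (cyclicOrbit a o) (w⁻¹ • o), dist o p ≤ T)
    (hcrit2 : ∀ p ∈ projSet (cyclicOrbit a o) (w • o), dist o p ≤ T)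
    (hδ : 2*T + 6*C < dist o (w • o)) :
    dist o (w • o) ≤ stableLength o (w * (a^N * a^N)) := by
  set A := cyclicOrbit a o with hA
  have hAne : A.Nonempty := cyclicOrbit_nonempty a o
  have hoA : o ∈ A := o_mem_cyclicOrbit a o
  set u := w * (a^N * a^N) with hu
  set τ := T + 8*C with hτdef
  have hτ0 : 0 ≤ τ := by simp only [hτdef]; linarith
  set δ := dist o (w • o) with hδdef
  -- closure-extended no-wrap bound
  have hclos : ∀ y'' ∈ closure ((fun x => w • x) '' A), ∀ p ∈ projSet A y'',
      dist o p ≤ (T + C) + 4*C := by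
    apply proj_bound_closure hgeo hC hAne hconA
    rintro y ⟨z, ⟨k, rfl⟩, rfl⟩ p hp
    have : (fun x => w • x) ((a^k) • o) = (w * a^k) • o := by rw [mul_smul]
    rw [this] at hp
    exact no_wrap hiso hgeo o hC hT hconA hconA hAne hcrit1 hcrit2 hδ k p hp
  -- the double power of a moves o far
  have hdista : 2*(N:ℝ)/K - c ≤ dist o ((a^N * a^N) • o) := by
    have := dist_zpow_lower hQI (N + N)
    rw [pow_add] at this
    push_cast at this
    calc 2*(N:ℝ)/K - c = ((N:ℝ) + (N:ℝ))/K - c := by ring_nf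
      _ ≤ _ := this
  have hbig : 5*τ + 18*C + 1 ≤ 2*(N:ℝ)/K - c := by
    have hK0 : (0:ℝ) < K := by linarith
    have h1 : (5*(T + 8*C) + 30*C + c + 1) ≤ (N:ℝ)/K := hN
    have h2 : (N:ℝ)/K ≤ 2*(N:ℝ)/K := by
      have hNn : (0:ℝ) ≤ (N:ℝ)/K := by positivity
      calc (N:ℝ)/K = (N:ℝ)/K := rfl
        _ ≤ (N:ℝ)/K + (N:ℝ)/K := by linarith
        _ = 2*(N:ℝ)/K := by ring
    simp only [hτdef]
    linarith
  have hgain : 4*τ + 24*C ≤ 2*(N:ℝ)/K - c := by linarith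
  -- the chain data
  set V : ℕ → Set X := fun i => (fun x => (u^(i-1) * w) • x) '' A with hV
  set α : ℕ → X := fun i => (u^(i-1) * w) • o with hα
  set β : ℕ → X := fun i => (u^i) • o with hβ
  have hβ0 : β 0 = o := by simp only [hβ, pow_zero, one_smul]
  have hβV : ∀ j : ℕ, β (j+1) = (u^j * w) • ((a^N * a^N) • o) := by
    intro j
    simp only [hβ]
    rw [← mul_smul]
    congr 1
    rw [pow_succ, hu, mul_assoc]
  have hβw : ∀ j : ℕ, β j = (u^j * w) • (w⁻¹ • o) := by
    intro j
    simp only [hβ]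
    rw [← mul_smul, mul_assoc, mul_inv_cancel, mul_one]
  -- main chain estimate for each power
  have hmain : ∀ M : ℕ, 1 ≤ M → (M:ℝ) * δ ≤ dist o ((u^M) • o) := by
    intro M hM
    have hVprop : ∀ i, 1 ≤ i → i ≤ M → (V i).Nonempty ∧ IsContractingWith C (V i) ∧
        α i ∈ V i ∧ β i ∈ V i ∧ (5*τ + 18*C + 1) ≤ dist (α i) (β i) := by
      intro i h1 h2
      obtain ⟨j, rfl⟩ : ∃ j, i = j + 1 := ⟨i - 1, by omega⟩
      simp only [hV, hα, Nat.succ_sub_one]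
      refine ⟨hAne.image _, contracting_smul hiso _ hconA, ⟨o, hoA, rfl⟩, ?_, ?_⟩
      · rw [hβV j]
        refine ⟨(a^N * a^N) • o, ?_, rfl⟩
        rw [← pow_add]
        exact ⟨((N+N : ℕ) : ℤ), by show a^(((N+N:ℕ)):ℤ) • o = a^(N+N) • o; rw [zpow_natCast]⟩
      · rw [hβV j, smul_dist hiso]
        linarith
    have hH2 : ∀ i, 1 ≤ i → i ≤ M → ∀ p ∈ projSet (V i) (β (i-1)), dist p (α i) ≤ τ := by
      intro i h1 h2 p hp
      obtain ⟨j, rfl⟩ : ∃ j, i = j + 1 := ⟨i - 1, by omega⟩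
      simp only [hV, hα, Nat.succ_sub_one] at hp ⊢
      rw [hβw j, projSet_smul hiso] at hp
      obtain ⟨p', hp', rfl⟩ := hp
      rw [smul_dist hiso]
      have := hcrit1 p' hp'
      rw [dist_comm]
      simp only [hτdef]
      linarith
    have hH4 : ∀ i, 1 ≤ i → i < M → ∀ y ∈ closure (V (i+1)), ∀ p ∈ projSet (V i) y,
        dist p (β i) ≤ τ := by
      intro i h1 h2 y hy p hp
      obtain ⟨j, rfl⟩ : ∃ j, i = j + 1 := ⟨i - 1, by omega⟩
      simp only [hV, Nat.succ_sub_one, Nat.add_sub_cancel] at hy hp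
      rw [mlsClosure_smul hiso] at hy
      obtain ⟨y', hy', rfl⟩ := hy
      have hyrw : (fun x => (u^(j+1) * w) • x) y' = (u^j * w) • ((a^N * a^N * w) • y') := by
        show (u^(j+1) * w) • y' = (u^j * w) • ((a^N * a^N * w) • y')
        rw [← mul_smul]
        congr 1
        rw [pow_succ, hu]
        group
      rw [hyrw, projSet_smul hiso] at hp
      obtain ⟨p', hp', rfl⟩ := hp
      have hpow : a^N * a^N = a^(((N + N : ℕ)) : ℤ) := by
        rw [zpow_natCast, pow_add]
      have hshift : (a^N * a^N * w) • y' = (a^(((N + N : ℕ)) : ℤ)) • (w • y') := by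
        rw [mul_smul, hpow]
      rw [hshift, projSet_axis_shift hiso] at hp'
      obtain ⟨p'', hp'', rfl⟩ := hp'
      rw [hβV j, smul_dist hiso]
      have hob : (a^N * a^N) • o = (a^(((N + N : ℕ)) : ℤ)) • o := by rw [hpow]
      rw [hob, smul_dist hiso]
      have hmem : w • y' ∈ closure ((fun x => w • x) '' A) := by
        rw [mlsClosure_smul hiso]
        exact ⟨y', hy', rfl⟩
      have := hclos (w • y') hmem p'' hp''
      rw [dist_comm]
      simp only [hτdef]
      linarith
    obtain ⟨-, hlen⟩ := chain_lemma hgeo hC hτ0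
      (by linarith : 5*τ + 18*C < 5*τ + 18*C + 1) V α β M hM hVprop hH2 hH4
    have hsum : (M:ℝ) * (δ + (2*(N:ℝ)/K - c)) ≤
        ∑ i ∈ Finset.range M, (dist (β i) (α (i+1)) + dist (α (i+1)) (β (i+1))) := by
      rw [show (M:ℝ) * (δ + (2*(N:ℝ)/K - c)) =
        ∑ _i ∈ Finset.range M, (δ + (2*(N:ℝ)/K - c)) by
          rw [Finset.sum_const, Finset.card_range, nsmul_eq_mul]]
      apply Finset.sum_le_sum
      intro i _
      have e1 : dist (β i) (α (i+1)) = δ := by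
        simp only [hβ, hα, Nat.add_sub_cancel]
        rw [show (u^i * w) • o = (u^i) • (w • o) by rw [mul_smul], smul_dist hiso]
      have e2 : 2*(N:ℝ)/K - c ≤ dist (α (i+1)) (β (i+1)) := by
        simp only [hα, Nat.add_sub_cancel]
        rw [hβV i, smul_dist hiso]
        exact hdista
      linarith
    rw [hβ0] at hlen
    have hlen' : (∑ i ∈ Finset.range M,
        (dist (β i) (α (i+1)) + dist (α (i+1)) (β (i+1)))) - (M:ℝ) * (4*τ + 24*C) ≤
        dist o ((u^M) • o) := hlen
    have hfin : (M:ℝ) * (δ + (2*(N:ℝ)/K - c)) - (M:ℝ) * (4*τ + 24*C) ≤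
        dist o ((u^M) • o) :=
      (sub_le_sub_right hsum _).trans hlen'
    have hM1 : (1:ℝ) ≤ (M:ℝ) := by exact_mod_cast hM
    nlinarith [hgain, hM1]
  exact le_stableLength hmain

end Estimates

section CrossEstimate

variable {G : Type*} {X : Type*} [Group G] [MetricSpace X] [ProperSpace X] [MulAction G X]

/-- **Cross-axis estimate**: if `w⁻¹ • o` projects near `o` on the axis of `a` and
`w • o` projects near `o` on the axis of `b`, and `w` has large displacement, then
`w · a^N · b^N` has stable length at least `d(o, w • o)`. -/
lemma cross_axis_estimate (hiso : ∀ g : G, Isometry fun x : X => g • x)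
    (hgeo : GeodesicSpace X) (o : X) {a b : G} {C T K c : ℝ}
    (hC : 0 ≤ C) (hT : 0 ≤ T) (hK : 1 ≤ K) (hc : 0 ≤ c)
    (hconA : IsContractingWith C (cyclicOrbit a o))
    (hconB : IsContractingWith C (cyclicOrbit b o))
    (hQIa : ∀ m n : ℤ, |(m:ℝ)-(n:ℝ)|/K - c ≤ dist ((a^m) • o) ((a^n) • o))
    (hQIb : ∀ m n : ℤ, |(m:ℝ)-(n:ℝ)|/K - c ≤ dist ((b^m) • o) ((b^n) • o))
    (hAb : ∀ y ∈ cyclicOrbit b o, ∀ p ∈ projSet (cyclicOrbit a o) y, dist o p ≤ T + 4*C)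
    {w : G} {N : ℕ}
    (hN : 5*(T + 8*C) + 30*C + c + 1 ≤ (N:ℝ)/K)
    (hcrit1 : ∀ p ∈ projSet (cyclicOrbit a o) (w⁻¹ • o), dist o p ≤ T)
    (hcrit2 : ∀ p ∈ projSet (cyclicOrbit b o) (w • o), dist o p ≤ T)
    (hδ : 2*T + 6*C < dist o (w • o)) :
    dist o (w • o) ≤ stableLength o (w * (a^N * b^N)) := by
  set A := cyclicOrbit a o with hA
  set B := cyclicOrbit b o with hB
  have hAne : A.Nonempty := cyclicOrbit_nonempty a o
  have hBne : B.Nonempty := cyclicOrbit_nonempty b o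
  have hoA : o ∈ A := o_mem_cyclicOrbit a o
  have hoB : o ∈ B := o_mem_cyclicOrbit b o
  set u := w * (a^N * b^N) with hu
  set τ := T + 8*C with hτdef
  have hτ0 : 0 ≤ τ := by simp only [hτdef]; linarith
  set δ := dist o (w • o) with hδdef
  -- closure-extended projection bounds
  have hclosB : ∀ y'' ∈ closure ((fun x => w • x) '' A), ∀ p ∈ projSet B y'',
      dist o p ≤ (T + C) + 4*C := by
    apply proj_bound_closure hgeo hC hBne hconB
    rintro y ⟨z, ⟨k, rfl⟩, rfl⟩ p hp
    have : (fun x => w • x) ((a^k) • o) = (w * a^k) • o := by rw [mul_smul]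
    rw [this] at hp
    exact no_wrap hiso hgeo o hC hT hconA hconB hBne hcrit1 hcrit2 hδ k p hp
  have hclosA : ∀ y' ∈ closure B, ∀ p ∈ projSet A y', dist o p ≤ (T + 4*C) + 4*C :=
    proj_bound_closure hgeo hC hAne hconA hAb
  -- displacement along the axes
  have hdista : (N:ℝ)/K - c ≤ dist o ((a^N) • o) := dist_zpow_lower hQIa N
  have hdistb : (N:ℝ)/K - c ≤ dist o ((b^N) • o) := dist_zpow_lower hQIb N
  have hbig : 5*τ + 18*C + 1 ≤ (N:ℝ)/K - c := by simp only [hτdef]; linarith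
  have hgain : 4*τ + 24*C ≤ (N:ℝ)/K - c := by simp only [hτdef]; linarith
  -- chain data
  set V : ℕ → Set X := fun i => if i % 2 = 1
    then (fun x => (u^(i/2) * w) • x) '' A
    else (fun x => (u^(i/2 - 1) * w * a^N) • x) '' B with hVd
  set α : ℕ → X := fun i => if i % 2 = 1
    then (u^(i/2) * w) • o else (u^(i/2 - 1) * w * a^N) • o with hαd
  set β : ℕ → X := fun i => if i % 2 = 1
    then (u^(i/2) * w * a^N) • o else (u^(i/2)) • o with hβd
  have hVodd : ∀ j : ℕ, V (2*j+1) = (fun x => (u^j * w) • x) '' A := by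
    intro j
    simp only [hVd]
    rw [if_pos (by omega : (2*j+1) % 2 = 1), (show (2*j+1)/2 = j by omega)]
  have hVeven : ∀ j : ℕ, V (2*j+2) = (fun x => (u^j * w * a^N) • x) '' B := by
    intro j
    simp only [hVd]
    rw [if_neg (by omega : ¬((2*j+2) % 2 = 1)), (show (2*j+2)/2 - 1 = j by omega)]
  have hαodd : ∀ j : ℕ, α (2*j+1) = (u^j * w) • o := by
    intro j
    simp only [hαd]
    rw [if_pos (by omega : (2*j+1) % 2 = 1), (show (2*j+1)/2 = j by omega)]
  have hαeven : ∀ j : ℕ, α (2*j+2) = (u^j * w * a^N) • o := by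
    intro j
    simp only [hαd]
    rw [if_neg (by omega : ¬((2*j+2) % 2 = 1)), (show (2*j+2)/2 - 1 = j by omega)]
  have hβodd : ∀ j : ℕ, β (2*j+1) = (u^j * w * a^N) • o := by
    intro j
    simp only [hβd]
    rw [if_pos (by omega : (2*j+1) % 2 = 1), (show (2*j+1)/2 = j by omega)]
  have hβeven : ∀ j : ℕ, β (2*j) = (u^j) • o := by
    intro j
    simp only [hβd]
    rw [if_neg (by omega : ¬((2*j) % 2 = 1)), (show (2*j)/2 = j by omega)]
  -- group-algebra facts
  have hper : ∀ j : ℕ, u^(j+1) = u^j * w * a^N * b^N := by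
    intro j
    rw [pow_succ, hu]
    group
  have hβeven' : ∀ j : ℕ, β (2*(j+1)) = (u^j * w * a^N) • ((b^N) • o) := by
    intro j
    rw [hβeven, ← mul_smul, hper]
  have haNA : (a^N) • o ∈ A := ⟨(N : ℤ), by show a^((N:ℕ):ℤ) • o = a^N • o; rw [zpow_natCast]⟩
  have hbNB : (b^N) • o ∈ B := ⟨(N : ℤ), by show b^((N:ℕ):ℤ) • o = b^N • o; rw [zpow_natCast]⟩
  -- the main chain estimate
  have hmain : ∀ m : ℕ, 1 ≤ m → (m:ℝ) * δ ≤ dist o ((u^m) • o) := by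
    intro m hm
    set M := 2*m with hM
    have hM1 : 1 ≤ M := by omega
    have hVprop : ∀ i, 1 ≤ i → i ≤ M → (V i).Nonempty ∧ IsContractingWith C (V i) ∧
        α i ∈ V i ∧ β i ∈ V i ∧ (5*τ + 18*C + 1) ≤ dist (α i) (β i) := by
      intro i h1 h2
      rcases Nat.even_or_odd i with he | ho
      · have h2' : i % 2 = 0 := Nat.even_iff.1 he
        obtain ⟨j, rfl⟩ : ∃ j, i = 2*j+2 := ⟨i/2 - 1, by omega⟩
        rw [hVeven, hαeven, (show 2*j+2 = 2*(j+1) by ring), hβeven']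
        refine ⟨hBne.image _, contracting_smul hiso _ hconB, ⟨o, hoB, rfl⟩,
          ⟨(b^N) • o, hbNB, rfl⟩, ?_⟩
        rw [smul_dist hiso]
        linarith
      · obtain ⟨j, rfl⟩ := ho
        rw [hVodd, hαodd, hβodd]
        refine ⟨hAne.image _, contracting_smul hiso _ hconA, ⟨o, hoA, rfl⟩, ?_, ?_⟩
        · exact ⟨(a^N) • o, haNA, by
            show (u^j * w) • ((a^N) • o) = (u^j * w * a^N) • o
            rw [← mul_smul]⟩
        · rw [show (u^j * w * a^N) • o = (u^j * w) • ((a^N) • o) by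
            rw [← mul_smul], smul_dist hiso]
          linarith
    have hH2 : ∀ i, 1 ≤ i → i ≤ M → ∀ p ∈ projSet (V i) (β (i-1)), dist p (α i) ≤ τ := by
      intro i h1 h2 p hp
      rcases Nat.even_or_odd i with he | ho
      · -- even: the previous exit is the entrance itself
        have h2' : i % 2 = 0 := Nat.even_iff.1 he
        obtain ⟨j, rfl⟩ : ∃ j, i = 2*j+2 := ⟨i/2 - 1, by omega⟩
        rw [(show 2*j+2-1 = 2*j+1 by omega), hβodd, hVeven] at hp
        have hmem : (u^j * w * a^N) • o ∈ (fun x => (u^j * w * a^N) • x) '' B :=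
          ⟨o, hoB, rfl⟩
        have := projSet_of_mem hmem hp
        rw [this, hαeven, dist_self]
        exact hτ0
      · obtain ⟨j, rfl⟩ := ho
        rw [(show 2*j+1-1 = 2*j by omega), hβeven, hVodd] at hp
        rw [show (u^j) • o = (u^j * w) • (w⁻¹ • o) by
          rw [← mul_smul, mul_assoc, mul_inv_cancel, mul_one], projSet_smul hiso] at hp
        obtain ⟨p', hp', rfl⟩ := hp
        rw [hαodd, smul_dist hiso, dist_comm]
        have := hcrit1 p' hp'
        simp only [hτdef]
        linarith
    have hH4 : ∀ i, 1 ≤ i → i < M → ∀ y ∈ closure (V (i+1)), ∀ p ∈ projSet (V i) y,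
        dist p (β i) ≤ τ := by
      intro i h1 h2 y hy p hp
      rcases Nat.even_or_odd i with he | ho
      · -- even stage: next is odd, use the no-wrap bound
        have h2' : i % 2 = 0 := Nat.even_iff.1 he
        obtain ⟨j, rfl⟩ : ∃ j, i = 2*j+2 := ⟨i/2 - 1, by omega⟩
        rw [(show 2*j+2+1 = 2*(j+1)+1 by ring), hVodd] at hy
        rw [mlsClosure_smul hiso] at hy
        obtain ⟨y', hy', rfl⟩ := hy
        rw [hVeven] at hp
        have hyrw : (fun x => (u^(j+1) * w) • x) y' =
            (u^j * w * a^N) • ((b^N) • (w • y')) := by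
          show (u^(j+1) * w) • y' = (u^j * w * a^N) • ((b^N) • (w • y'))
          rw [← mul_smul, ← mul_smul, hper]
          try congr 1
          try group
        rw [hyrw, projSet_smul hiso] at hp
        obtain ⟨p', hp', rfl⟩ := hp
        have hpow : (b:G)^N = b^((N:ℕ):ℤ) := by rw [zpow_natCast]
        rw [hpow, projSet_axis_shift hiso] at hp'
        obtain ⟨p'', hp'', rfl⟩ := hp'
        rw [(show 2*j+2 = 2*(j+1) by ring), hβeven', smul_dist hiso, hpow,
          smul_dist hiso]
        have hmem : w • y' ∈ closure ((fun x => w • x) '' A) := by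
          rw [mlsClosure_smul hiso]
          exact ⟨y', hy', rfl⟩
        have := hclosB (w • y') hmem p'' hp''
        rw [dist_comm]
        simp only [hτdef]
        linarith
      · -- odd stage: next is even, use the axis-to-axis bound
        obtain ⟨j, rfl⟩ := ho
        rw [(show 2*j+1+1 = 2*j+2 by ring), hVeven] at hy
        rw [mlsClosure_smul hiso] at hy
        obtain ⟨y', hy', rfl⟩ := hy
        rw [hVodd] at hp
        have hyrw : (fun x => (u^j * w * a^N) • x) y' =
            (u^j * w) • ((a^N) • y') := by
          show (u^j * w * a^N) • y' = (u^j * w) • ((a^N) • y')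
          rw [← mul_smul, mul_assoc]
        rw [hyrw, projSet_smul hiso] at hp
        obtain ⟨p', hp', rfl⟩ := hp
        have hpow : (a:G)^N = a^((N:ℕ):ℤ) := by rw [zpow_natCast]
        rw [hpow, projSet_axis_shift hiso] at hp'
        obtain ⟨p'', hp'', rfl⟩ := hp'
        rw [hβodd, (show (u^j * w * a^N) • o = (u^j * w) • ((a^N) • o) by
          rw [← mul_smul]), smul_dist hiso, hpow, smul_dist hiso]
        have := hclosA y' hy' p'' hp''
        rw [dist_comm]
        simp only [hτdef]
        linarith
    obtain ⟨-, hlen⟩ := chain_lemma hgeo hC hτ0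
      (by linarith : 5*τ + 18*C < 5*τ + 18*C + 1) V α β M hM1 hVprop hH2 hH4
    -- sum estimate via pairing
    have hsum : (m:ℝ) * ((δ + ((N:ℝ)/K - c)) + ((N:ℝ)/K - c)) ≤
        ∑ i ∈ Finset.range M,
          (dist (β i) (α (i+1)) + dist (α (i+1)) (β (i+1))) := by
      apply sum_pair_lower
      · intro j hj
        have e1 : dist (β (2*j)) (α (2*j+1)) = δ := by
          rw [hβeven, hαodd, show (u^j * w) • o = (u^j) • (w • o) by rw [mul_smul],
            smul_dist hiso]
        have e2 : (N:ℝ)/K - c ≤ dist (α (2*j+1)) (β (2*j+1)) := by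
          rw [hαodd, hβodd, show (u^j * w * a^N) • o = (u^j * w) • ((a^N) • o) by
            rw [← mul_smul], smul_dist hiso]
          exact hdista
        rw [e1]
        linarith
      · intro j hj
        have e1 : dist (β (2*j+1)) (α (2*j+1+1)) = 0 := by
          rw [show 2*j+1+1 = 2*j+2 by ring, hβodd, hαeven, dist_self]
        have e2 : (N:ℝ)/K - c ≤ dist (α (2*j+1+1)) (β (2*j+1+1)) := by
          rw [show 2*j+1+1 = 2*j+2 by ring, hαeven, show 2*j+2 = 2*(j+1) by ring,
            hβeven', smul_dist hiso]
          exact hdistb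
        rw [e1]
        linarith
    have hβ0 : β 0 = o := by
      have := hβeven 0
      simpa using this
    rw [hβ0] at hlen
    have hβM : β M = (u^m) • o := hβeven m
    rw [hβM] at hlen
    have hfin := (sub_le_sub_right hsum ((M:ℝ) * (4*τ + 24*C))).trans hlen
    have hM2 : (M:ℝ) = 2*(m:ℝ) := by push_cast [hM]; ring
    have hm1 : (1:ℝ) ≤ (m:ℝ) := by exact_mod_cast hm
    rw [hM2] at hfin
    nlinarith [hgain, hm1]
  exact le_stableLength hmain

end CrossEstimate

/-- **Extension lemma** (Yang): in an action with the contracting property there are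
finitely many elements `f` such that every `w ∈ G` admits one with
`d(o, w·o) ≤ ℓ(w f) + D`. -/
lemma extension {G X : Type*} [Group G] [MetricSpace X] [ProperSpace X] [MulAction G X]
    (hiso : ∀ g : G, Isometry fun x : X => g • x) (hgeo : GeodesicSpace X) (o : X)
    (hcp : ContractingProperty G X o) :
    ∃ (D : ℝ) (F : Finset G), 0 ≤ D ∧
      ∀ w : G, ∃ f ∈ F, dist o (w • o) ≤ stableLength o (w * f) + D := by
  classical
  obtain ⟨g, h, ⟨⟨Cg, hCg0, hCg⟩, Kg, cg, hKg, hcg, hQIg⟩,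
    ⟨⟨Ch, hCh0, hCh⟩, Kh, ch, hKh, hch, hQIh⟩, hwi⟩ := hcp
  set C := max Cg Ch with hCdef
  have hC0 : 0 ≤ C := le_trans hCg0 (le_max_left _ _)
  have hconA : IsContractingWith C (cyclicOrbit g o) :=
    contracting_mono hCg (le_max_left _ _)
  have hconB : IsContractingWith C (cyclicOrbit h o) :=
    contracting_mono hCh (le_max_right _ _)
  set K := max Kg Kh with hKdef
  have hK : 1 ≤ K := le_trans hKg (le_max_left _ _)
  set c := max cg ch with hcdef
  have hc0 : 0 ≤ c := le_trans hcg (le_max_left _ _)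
  have hKg0 : (0:ℝ) < Kg := by linarith
  have hKh0 : (0:ℝ) < Kh := by linarith
  have hQIa : ∀ m n : ℤ, |(m:ℝ)-(n:ℝ)|/K - c ≤ dist ((g^m) • o) ((g^n) • o) := by
    intro m n
    have h1 := (hQIg m n).1
    have hdiv : |(m:ℝ)-(n:ℝ)|/K ≤ |(m:ℝ)-(n:ℝ)|/Kg :=
      div_le_div_of_nonneg_left (abs_nonneg _) hKg0 (le_max_left _ _)
    have hcc : cg ≤ c := le_max_left _ _
    linarith
  have hQIb : ∀ m n : ℤ, |(m:ℝ)-(n:ℝ)|/K - c ≤ dist ((h^m) • o) ((h^n) • o) := by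
    intro m n
    have h1 := (hQIh m n).1
    have hdiv : |(m:ℝ)-(n:ℝ)|/K ≤ |(m:ℝ)-(n:ℝ)|/Kh :=
      div_le_div_of_nonneg_left (abs_nonneg _) hKh0 (le_max_right _ _)
    have hcc : ch ≤ c := le_max_right _ _
    linarith
  obtain ⟨T, hT0, hTC, hdi⟩ := axis_dichotomy hiso hgeo o hC0 hconA hconB hwi
  have hAb : ∀ y ∈ cyclicOrbit h o, ∀ p ∈ projSet (cyclicOrbit g o) y,
      dist o p ≤ T + 4*C := cross_proj_bound hiso hgeo o hC0 hconA hdi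
  have hBa : ∀ y ∈ cyclicOrbit g o, ∀ p ∈ projSet (cyclicOrbit h o) y,
      dist o p ≤ T + 4*C :=
    cross_proj_bound hiso hgeo o hC0 hconB (fun x => (hdi x).symm)
  set Q := 5*(T + 8*C) + 30*C + c + 1 with hQdef
  have hQ0 : 0 ≤ Q := by simp only [hQdef]; linarith
  set N := ⌈K * Q⌉₊ with hNdef
  have hN : Q ≤ (N:ℝ)/K := by
    have hK0 : (0:ℝ) < K := by linarith
    rw [le_div_iff₀ hK0]
    have := Nat.le_ceil (K * Q)
    calc Q * K = K * Q := by ring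
      _ ≤ (N:ℝ) := this
  set D := 2*T + 6*C with hDdef
  have hD0 : 0 ≤ D := by simp only [hDdef]; linarith
  set F : Finset G := {g^N * g^N, g^N * h^N, h^N * g^N, h^N * h^N} with hFdef
  refine ⟨D, F, hD0, ?_⟩
  intro w
  by_cases hδ : dist o (w • o) ≤ 2*T + 6*C
  · refine ⟨g^N * g^N, by simp [hFdef], ?_⟩
    have := stableLength_nonneg o (w * (g^N * g^N))
    simp only [hDdef]
    linarith
  · push_neg at hδ
    rcases hdi (w⁻¹ • o) with hc1 | hc1 <;> rcases hdi (w • o) with hc2 | hc2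
    · refine ⟨g^N * g^N, by simp [hFdef], ?_⟩
      have := same_axis_estimate hiso hgeo o hC0 hT0 hK hc0 hconA hQIa hN hc1 hc2 hδ
      linarith
    · refine ⟨g^N * h^N, by simp [hFdef], ?_⟩
      have := cross_axis_estimate hiso hgeo o hC0 hT0 hK hc0 hconA hconB hQIa hQIb
        hAb hN hc1 hc2 hδ
      linarith
    · refine ⟨h^N * g^N, by simp [hFdef], ?_⟩
      have := cross_axis_estimate hiso hgeo o hC0 hT0 hK hc0 hconB hconA hQIb hQIa
        hBa hN hc1 hc2 hδ
      linarith
    · refine ⟨h^N * h^N, by simp [hFdef], ?_⟩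
      have := same_axis_estimate hiso hgeo o hC0 hT0 hK hc0 hconB hQIb hN hc1 hc2 hδ
      linarith

lemma stableLength_le_dist {G X : Type*} [Group G] [MetricSpace X] [MulAction G X]
    (o : X) (w : G) : stableLength o w ≤ dist o (w • o) := by
  have hb : BddBelow (Set.range fun n : ℕ+ => dist o ((w ^ (n : ℕ)) • o) / ((n : ℕ) : ℝ)) := by
    refine ⟨0, ?_⟩
    rintro x ⟨n, rfl⟩
    exact div_nonneg dist_nonneg (by positivity)
  have h := ciInf_le hb (1 : ℕ+)
  simpa [stableLength] using h

/-- Marked length spectrum rigidity for two actions with the contracting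
property: if the two actions have the same marked length spectrum, then the orbit map
`g • o₁ ↦ g • o₂` is a rough isometry, i.e.
`sup_{g,h} |d₁(g•o₁, h•o₁) − d₂(g•o₂, h•o₂)| < ∞`. -/
theorem mls_rigidity {G X1 X2 : Type*} [Group G]
    [MetricSpace X1] [ProperSpace X1] [MetricSpace X2] [ProperSpace X2]
    [MulAction G X1] [MulAction G X2]
    (hiso1 : ∀ g : G, Isometry fun x : X1 => g • x)
    (hiso2 : ∀ g : G, Isometry fun x : X2 => g • x)
    (hgeo1 : GeodesicSpace X1) (hgeo2 : GeodesicSpace X2)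
    (o1 : X1) (o2 : X2)
    (hcp1 : ContractingProperty G X1 o1) (hcp2 : ContractingProperty G X2 o2)
    (hMLS : ∀ g : G, stableLength o1 g = stableLength o2 g) :
    ∃ C : ℝ, 0 ≤ C ∧ ∀ g h : G,
      |dist (g • o1) (h • o1) - dist (g • o2) (h • o2)| ≤ C := by

  obtain ⟨D1, F1, hD1, hF1⟩ := extension hiso1 hgeo1 o1 hcp1
  obtain ⟨D2, F2, hD2, hF2⟩ := extension hiso2 hgeo2 o2 hcp2
  have hF1ne : F1.Nonempty := by obtain ⟨f, hf, -⟩ := hF1 1; exact ⟨f, hf⟩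
  have hF2ne : F2.Nonempty := by obtain ⟨f, hf, -⟩ := hF2 1; exact ⟨f, hf⟩
  set M1 : ℝ := F1.sup' hF1ne (fun f => dist o2 (f • o2)) with hM1
  set M2 : ℝ := F2.sup' hF2ne (fun f => dist o1 (f • o1)) with hM2
  -- key: for every w, |d1(o1, w o1) - d2(o2, w o2)| ≤ max (D1+M1) (D2+M2)
  have key : ∀ w : G, |dist o1 (w • o1) - dist o2 (w • o2)| ≤ max (D1 + M1) (D2 + M2) := by
    intro w
    have h12 : dist o1 (w • o1) ≤ dist o2 (w • o2) + (D1 + M1) := by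
      obtain ⟨f, hf, hle⟩ := hF1 w
      have e1 : stableLength o1 (w * f) = stableLength o2 (w * f) := hMLS _
      have e2 : stableLength o2 (w * f) ≤ dist o2 ((w * f) • o2) :=
        stableLength_le_dist o2 (w * f)
      have e3 : dist o2 ((w * f) • o2) ≤ dist o2 (w • o2) + dist o2 (f • o2) := by
        have : dist (w • o2) ((w * f) • o2) = dist o2 (f • o2) := by
          rw [mul_smul]; exact (hiso2 w).dist_eq o2 (f • o2)
        calc dist o2 ((w * f) • o2) ≤ dist o2 (w • o2) + dist (w • o2) ((w * f) • o2) :=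
              dist_triangle _ _ _
          _ = dist o2 (w • o2) + dist o2 (f • o2) := by rw [this]
      have e4 : dist o2 (f • o2) ≤ M1 := Finset.le_sup' (fun f => dist o2 (f • o2)) hf
      calc dist o1 (w • o1) ≤ stableLength o1 (w * f) + D1 := hle
        _ = stableLength o2 (w * f) + D1 := by rw [e1]
        _ ≤ dist o2 ((w * f) • o2) + D1 := by linarith
        _ ≤ dist o2 (w • o2) + dist o2 (f • o2) + D1 := by linarith
        _ ≤ dist o2 (w • o2) + (D1 + M1) := by linarith
    have h21 : dist o2 (w • o2) ≤ dist o1 (w • o1) + (D2 + M2) := by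
      obtain ⟨f, hf, hle⟩ := hF2 w
      have e1 : stableLength o2 (w * f) = stableLength o1 (w * f) := (hMLS _).symm
      have e2 : stableLength o1 (w * f) ≤ dist o1 ((w * f) • o1) :=
        stableLength_le_dist o1 (w * f)
      have e3 : dist o1 ((w * f) • o1) ≤ dist o1 (w • o1) + dist o1 (f • o1) := by
        have : dist (w • o1) ((w * f) • o1) = dist o1 (f • o1) := by
          rw [mul_smul]; exact (hiso1 w).dist_eq o1 (f • o1)
        calc dist o1 ((w * f) • o1) ≤ dist o1 (w • o1) + dist (w • o1) ((w * f) • o1) :=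
              dist_triangle _ _ _
          _ = dist o1 (w • o1) + dist o1 (f • o1) := by rw [this]
      have e4 : dist o1 (f • o1) ≤ M2 := Finset.le_sup' (fun f => dist o1 (f • o1)) hf
      calc dist o2 (w • o2) ≤ stableLength o2 (w * f) + D2 := hle
        _ = stableLength o1 (w * f) + D2 := by rw [e1]
        _ ≤ dist o1 ((w * f) • o1) + D2 := by linarith
        _ ≤ dist o1 (w • o1) + dist o1 (f • o1) + D2 := by linarith
        _ ≤ dist o1 (w • o1) + (D2 + M2) := by linarith
    rw [abs_sub_le_iff]
    constructor
    · calc dist o1 (w • o1) - dist o2 (w • o2) ≤ D1 + M1 := by linarith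
        _ ≤ max (D1 + M1) (D2 + M2) := le_max_left _ _
    · calc dist o2 (w • o2) - dist o1 (w • o1) ≤ D2 + M2 := by linarith
        _ ≤ max (D1 + M1) (D2 + M2) := le_max_right _ _
  refine ⟨max (max (D1 + M1) (D2 + M2)) 0, le_max_right _ _, ?_⟩
  intro g h
  have r1 : dist (g • o1) (h • o1) = dist o1 ((g⁻¹ * h) • o1) := by
    have := (hiso1 g⁻¹).dist_eq (g • o1) (h • o1)
    rw [← this, ← mul_smul, ← mul_smul, inv_mul_cancel, one_smul]
  have r2 : dist (g • o2) (h • o2) = dist o2 ((g⁻¹ * h) • o2) := by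
    have := (hiso2 g⁻¹).dist_eq (g • o2) (h • o2)
    rw [← this, ← mul_smul, ← mul_smul, inv_mul_cancel, one_smul]
  rw [r1, r2]
  exact le_trans (key (g⁻¹ * h)) (le_max_left _ _)
end

section
/- Let (X,d) be a proper geodesic metric space, let Y, Z ⊆ X be two subsets with Hausdorff distance d_H(Y,Z) < D < ∞, and suppose Y is C-contracting. Then Z is (6D + 7C)-contracting. -/
open Metric

lemma projSet_nonempty' {X : Type*} [MetricSpace X] [ProperSpace X]
    {Z : Set X} (hZ : Z.Nonempty) (x : X) : (projSet Z x).Nonempty := by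
  obtain ⟨y, hy, hdy⟩ := Metric.exists_mem_closure_infDist_eq_dist hZ x
  exact ⟨y, hy, hdy.symm⟩

lemma dist_proj_proj_le {X : Type*} [MetricSpace X] [ProperSpace X]
    (hgeo : GeodesicSpace X) {Y Z : Set X} {C D : ℝ} (hC : 0 ≤ C) (hD : 0 < D)
    (hYne : Y.Nonempty)
    (hfin : EMetric.hausdorffEdist Y Z ≠ ⊤)
    (hHD : hausdorffDist Y Z ≤ D)
    (hY : IsContractingWith C Y)
    {x p p' : X} (hx : C + D ≤ infDist x Z)
    (hp : p ∈ projSet Z x) (hp' : p' ∈ projSet Y x) :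
    dist p p' ≤ 3 * C + 3 * D := by
  obtain ⟨hpc, hpd⟩ := hp
  set L := dist x p with hL
  have hLZ : infDist x Z = L := hpd.symm
  obtain ⟨s, γ, hiso, h0, hend, hs⟩ := hgeo x p
  set T := L - (C + D) with hT
  have hT0 : 0 ≤ T := by
    have := hx.trans_eq hLZ
    linarith
  have hTL : T ≤ L := by linarith
  have hmemT : T ∈ Set.Icc (0:ℝ) L := ⟨hT0, hTL⟩
  have hmem0 : (0:ℝ) ∈ Set.Icc (0:ℝ) L := ⟨le_refl _, by linarith⟩
  set m := γ T with hm
  have hdxm : dist x m = T := by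
    rw [← h0, hm, hiso 0 hmem0 T hmemT]
    rw [abs_of_nonpos (by linarith)]; ring
  have hdistZ : ∀ t ∈ Set.Icc (0:ℝ) L, L - t ≤ infDist (γ t) Z := by
    intro t ht
    have h1 : infDist x Z ≤ infDist (γ t) Z + dist x (γ t) :=
      Metric.infDist_le_infDist_add_dist
    have h2 : dist x (γ t) = t := by
      rw [← h0, hiso 0 hmem0 t ht, abs_of_nonpos (by linarith [ht.1])]; ring
    rw [h2, hLZ] at h1; linarith
  have hZY : ∀ w : X, infDist w Z ≤ infDist w Y + D := fun w =>
    (Metric.infDist_le_infDist_add_hausdorffDist hfin).trans (by linarith)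
  have hYZ : ∀ w : X, infDist w Y ≤ infDist w Z + D := fun w => by
    have := Metric.infDist_le_infDist_add_hausdorffDist (x := w) (s := Z) (t := Y)
      (by rwa [EMetric.hausdorffEdist_comm])
    rw [Metric.hausdorffDist_comm] at this
    exact this.trans (by linarith)
  set s' := γ '' Set.Icc (0:ℝ) T with hs'
  have hseg : IsGeodesicSegment s' := by
    refine ⟨x, m, γ, ?_, h0, ?_, ?_⟩
    · intro u hu v hv
      rw [hdxm] at hu hv
      exact hiso u ⟨hu.1, hu.2.trans hTL⟩ v ⟨hv.1, hv.2.trans hTL⟩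
    · rw [hdxm]
    · rw [hdxm]
  have hfar : ∀ w ∈ s', C ≤ infDist w Y := by
    rintro w ⟨t, ht, rfl⟩
    have h1 := hdistZ t ⟨ht.1, ht.2.trans hTL⟩
    have h2 := hZY (γ t)
    have h3 : L - t ≤ infDist (γ t) Y + D := by linarith
    have := ht.2
    linarith
  obtain ⟨ym, hymcl, hymd⟩ := projSet_nonempty' hYne m
  have hdmym : dist m ym ≤ C + 2 * D := by
    rw [hymd]
    have h1 := hYZ m
    have h2 : infDist m Z ≤ L - T := by
      rw [← Metric.infDist_closure]
      have : dist m p = L - T := by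
        rw [hm, ← hend, hiso T hmemT L ⟨by linarith, le_refl _⟩,
          abs_of_nonpos (by linarith)]; ring
      exact this ▸ Metric.infDist_le_dist_of_mem hpc
    linarith
  have hxs' : x ∈ s' := ⟨0, ⟨le_refl _, hT0⟩, h0⟩
  have hms' : m ∈ s' := ⟨T, ⟨hT0, le_refl _⟩, rfl⟩
  have hp's : p' ∈ projSetOf Y s' := Set.mem_biUnion hxs' hp'
  have hyms : ym ∈ projSetOf Y s' := Set.mem_biUnion hms' ⟨hymcl, hymd⟩
  have hkey : dist p' ym ≤ C := hY s' hseg hfar p' hp's ym hyms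
  have hdpm : dist p m = C + D := by
    rw [hm, ← hend, dist_comm, hiso T hmemT L ⟨by linarith, le_refl _⟩,
      abs_of_nonpos (by linarith)]; ring
  calc dist p p' ≤ dist p m + dist m ym + dist ym p' := dist_triangle4 p m ym p'
    _ ≤ (C + D) + (C + 2*D) + C := by
        rw [dist_comm ym p']
        linarith [hdpm.le, hdmym]
    _ = 3*C + 3*D := by ring


/-- if `Y` is `C`-contracting and `d_H(Y,Z) < D < ∞`, then `Z` is
`(6D + 7C)`-contracting. -/
theorem contracting_of_finite_hausdorff_distance {X : Type*}
    [MetricSpace X] [ProperSpace X] (hgeo : GeodesicSpace X)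
    (Y Z : Set X) (C D : ℝ) (hC : 0 ≤ C)
    (hH : EMetric.hausdorffEdist Y Z < ENNReal.ofReal D)
    (hY : IsContractingWith C Y) :
    IsContractingWith (6 * D + 7 * C) Z := by
  have hD : 0 < D := by
    by_contra h
    push_neg at h
    rw [ENNReal.ofReal_eq_zero.mpr h] at hH
    simp at hH
  have hfin : EMetric.hausdorffEdist Y Z ≠ ⊤ := hH.ne_top
  have hHD : hausdorffDist Y Z ≤ D := ENNReal.toReal_le_of_le_ofReal hD.le hH.le
  intro s hseg hsfar p hp q hq
  simp only [projSetOf, Set.mem_iUnion] at hp hq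
  obtain ⟨x, hxs, hpx⟩ := hp
  obtain ⟨x', hx's, hqx⟩ := hq
  have hZne : Z.Nonempty := closure_nonempty_iff.mp ⟨p, hpx.1⟩
  have hYne : Y.Nonempty := EMetric.nonempty_of_hausdorffEdist_ne_top hZne
    (by rwa [EMetric.hausdorffEdist_comm])
  have hYZ : ∀ w : X, infDist w Y ≤ infDist w Z + D := fun w => by
    have h1 := Metric.infDist_le_infDist_add_hausdorffDist (x := w) (s := Z) (t := Y)
      (by rwa [EMetric.hausdorffEdist_comm])
    rw [Metric.hausdorffDist_comm] at h1
    exact h1.trans (by linarith)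
  have hZY : ∀ w : X, infDist w Z ≤ infDist w Y + D := fun w =>
    (Metric.infDist_le_infDist_add_hausdorffDist hfin).trans (by linarith)
  have hsfarY : ∀ w ∈ s, C ≤ infDist w Y := by
    intro w hw
    have h1 := hsfar w hw
    have h2 := hZY w
    linarith
  obtain ⟨p', hp'⟩ := projSet_nonempty' hYne x
  obtain ⟨q', hq'⟩ := projSet_nonempty' hYne x'
  have hmid : dist p' q' ≤ C := hY s hseg hsfarY p' (Set.mem_biUnion hxs hp')
    q' (Set.mem_biUnion hx's hq')
  have h1 : dist p p' ≤ 3 * C + 3 * D := dist_proj_proj_le hgeo hC hD hYne hfin hHD hY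
    (by have := hsfar x hxs; linarith) hpx hp'
  have h2 : dist q q' ≤ 3 * C + 3 * D := dist_proj_proj_le hgeo hC hD hYne hfin hHD hY
    (by have := hsfar x' hx's; linarith) hqx hq'
  calc dist p q ≤ dist p p' + dist p' q' + dist q' q := dist_triangle4 p p' q' q
    _ ≤ (3*C+3*D) + C + (3*C+3*D) := by rw [dist_comm q' q]; linarith
    _ ≤ 6 * D + 7 * C := by linarith
end
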